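/- arXiv:2401.15718 — 11 statements merged into one kernel-verified Lean document; each statement's English description precedes it below -/
import Mathlib

section
/- Let P be a finite partially ordered set and let A, B be antichains in P with |A| ≤ |B| and A ≤ B. Then there exists a surjective function f : B → A such that for every lower set (order ideal) X of P satisfying A ∩ X ≠ ∅ and B ⊄ X, there is some b ∈ B \ X with f(b) ∈ X. -/
open Relation Finset

lemma key0 {P : Type*} : ∀ (n : ℕ) (A B : Finset P) (R : P → P → Prop), A.card = n → A.Nonempty →
    (∀ a ∈ A, ∃ b ∈ B, R a b) → (∀ b ∈ B, ∃ a ∈ A, R a b) → A.card ≤ B.card →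
    ∃ f : P → P, (∀ b ∈ B, f b ∈ A) ∧ (∀ a ∈ A, ∃ b ∈ B, f b = a) ∧
      ∀ a ∈ A, ∀ a' ∈ A, Relation.ReflTransGen (fun x y => ∃ b ∈ B, f b = x ∧ R y b) a a' := by
  intro n
  induction n using Nat.strong_induction_on with
  | _ n ih =>
    intro A B R hn hA h1 h2 h3
    classical
    rcases Nat.lt_or_ge n 2 with hn2 | hn2
    · -- base : card A = 1
      have hcard1 : A.card = 1 := by have := hA.card_pos; omega
      obtain ⟨a₁, rfl⟩ := Finset.card_eq_one.mp hcard1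
      refine ⟨fun _ => a₁, ?_, ?_, ?_⟩
      · intro b _; simp
      · intro a ha
        have hB : B.Nonempty := by rw [← Finset.card_pos]; omega
        obtain ⟨b, hb⟩ := hB
        simp only [Finset.mem_singleton] at ha
        exact ⟨b, hb, ha.symm⟩
      · intro a ha a' ha'
        simp only [Finset.mem_singleton] at ha ha'
        subst ha; subst ha'; exact .refl
    · -- inductive step
      have hBpos : 0 < B.card := lt_of_lt_of_le hA.card_pos h3
      set S : P → Finset P := fun b => A.filter (fun a => ∀ b' ∈ B, b' ≠ b → ¬ R a b') with hS
      -- there is b₀ with at most one "sole" element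
      have hex : ∃ b₀ ∈ B, (S b₀).card ≤ 1 := by
        by_contra hc
        push_neg at hc
        have hdisj : ∀ b ∈ B, ∀ b' ∈ B, b ≠ b' → Disjoint (S b) (S b') := by
          intro b hb b' hb' hne
          rw [Finset.disjoint_left]
          intro a haB haB'
          rw [hS, Finset.mem_filter] at haB haB'
          obtain ⟨c, hcB, hcR⟩ := h1 a haB.1
          by_cases hcb : c = b
          · exact haB'.2 c hcB (hcb ▸ hne.symm ∘ Eq.symm ∘ id) hcR
          · exact haB.2 c hcB hcb hcR
        have hsum : ∑ b ∈ B, (S b).card = (B.biUnion S).card :=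
          (Finset.card_biUnion hdisj).symm
        have hsub : B.biUnion S ⊆ A := by
          intro a ha
          rw [Finset.mem_biUnion] at ha
          obtain ⟨b, _, hb⟩ := ha
          exact (Finset.mem_filter.mp hb).1
        have h2sum : 2 * B.card ≤ ∑ b ∈ B, (S b).card := by
          calc 2 * B.card = ∑ _b ∈ B, 2 := by rw [Finset.sum_const, smul_eq_mul, mul_comm]
          _ ≤ ∑ b ∈ B, (S b).card := Finset.sum_le_sum (fun b hb => hc b hb)
        have := Finset.card_le_card hsub
        omega
      obtain ⟨b₀, hb₀B, hScard⟩ := hex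
      -- choose a₁ with R a₁ b₀ and S b₀ ⊆ {a₁}
      have hexa1 : ∃ a₁ ∈ A, R a₁ b₀ ∧ S b₀ ⊆ {a₁} := by
        by_cases hSe : S b₀ = ∅
        · obtain ⟨a, haA, haR⟩ := h2 b₀ hb₀B
          exact ⟨a, haA, haR, by simp [hSe]⟩
        · have : (S b₀).card = 1 := by
            have := Finset.card_pos.mpr (Finset.nonempty_of_ne_empty hSe); omega
          obtain ⟨x, hx⟩ := Finset.card_eq_one.mp this
          have hxS : x ∈ S b₀ := by simp [hx]
          rw [hS, Finset.mem_filter] at hxS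
          obtain ⟨b, hbB, hbR⟩ := h1 x hxS.1
          by_cases hbb : b = b₀
          · exact ⟨x, hxS.1, hbb ▸ hbR, by rw [hx]⟩
          · exact absurd hbR (hxS.2 b hbB hbb)
      obtain ⟨a₁, ha₁A, ha₁R, hsub₁⟩ := hexa1
      -- every a ≠ a₁ in A has a witness b ≠ b₀
      have hSole : ∀ a ∈ A, a ≠ a₁ → ∃ b ∈ B, b ≠ b₀ ∧ R a b := by
        intro a haA hne
        have hnS : a ∉ S b₀ := by
          intro h
          exact hne (Finset.mem_singleton.mp (hsub₁ h))
        have h' : ¬ (∀ b' ∈ B, b' ≠ b₀ → ¬ R a b') := by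
          intro hall
          exact hnS (by rw [hS]; exact Finset.mem_filter.mpr ⟨haA, hall⟩)
        push_neg at h'
        exact h'
      -- pick a₂ ≠ a₁
      obtain ⟨a₂, ha₂A, ha₂ne⟩ := Finset.exists_mem_ne (by rw [hn]; omega) a₁
      obtain ⟨bp, hbpB, hbpne, hbpR⟩ := hSole a₂ ha₂A ha₂ne
      -- recursion
      set A' := A.erase a₂ with hA'def
      set B' := B.erase b₀ with hB'def
      set R' : P → P → Prop := fun a b => (R a b ∧ a ≠ a₂) ∨ (a = a₁ ∧ R a₂ b) with hR'def
      have ha₁A' : a₁ ∈ A' := Finset.mem_erase.mpr ⟨Ne.symm ha₂ne, ha₁A⟩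
      have hbpB' : bp ∈ B' := Finset.mem_erase.mpr ⟨hbpne, hbpB⟩
      have hn' : A'.card = n - 1 := by rw [hA'def, Finset.card_erase_of_mem ha₂A, hn]
      have h1' : ∀ a ∈ A', ∃ b ∈ B', R' a b := by
        intro a ha
        obtain ⟨hane, haA⟩ := Finset.mem_erase.mp ha
        by_cases h : a = a₁
        · exact ⟨bp, hbpB', Or.inr ⟨h, hbpR⟩⟩
        · obtain ⟨b, hbB, hbne, hbR⟩ := hSole a haA h
          exact ⟨b, Finset.mem_erase.mpr ⟨hbne, hbB⟩, Or.inl ⟨hbR, hane⟩⟩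
      have h2' : ∀ b ∈ B', ∃ a ∈ A', R' a b := by
        intro b hb
        have hbB := Finset.mem_of_mem_erase hb
        obtain ⟨a, haA, haR⟩ := h2 b hbB
        by_cases h : a = a₂
        · exact ⟨a₁, ha₁A', Or.inr ⟨rfl, h ▸ haR⟩⟩
        · exact ⟨a, Finset.mem_erase.mpr ⟨h, haA⟩, Or.inl ⟨haR, h⟩⟩
      have h3' : A'.card ≤ B'.card := by
        rw [hn', hB'def, Finset.card_erase_of_mem hb₀B]; omega
      obtain ⟨f', hf'A, hf'surj, hf'SC⟩ :=
        ih (n - 1) (by omega) A' B' R' hn' ⟨a₁, ha₁A'⟩ h1' h2' h3'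
      -- lift
      set f : P → P := fun x => if x = b₀ then a₂ else f' x with hfdef
      have hfb₀ : f b₀ = a₂ := by rw [hfdef]; simp
      have hfeq : ∀ b, b ≠ b₀ → f b = f' b := by
        intro b hb; rw [hfdef]; simp [hb]
      refine ⟨f, ?_, ?_, ?_⟩
      · intro b hb
        by_cases h : b = b₀
        · rw [h, hfb₀]; exact ha₂A
        · rw [hfeq b h]
          exact Finset.mem_of_mem_erase (hf'A b (Finset.mem_erase.mpr ⟨h, hb⟩))
      · intro a ha
        by_cases h : a = a₂
        · exact ⟨b₀, hb₀B, h ▸ hfb₀⟩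
        · obtain ⟨b, hbB', hfb⟩ := hf'surj a (Finset.mem_erase.mpr ⟨h, ha⟩)
          obtain ⟨hbne, hbB⟩ := Finset.mem_erase.mp hbB'
          exact ⟨b, hbB, by rw [hfeq b hbne]; exact hfb⟩
      · -- strong connectivity
        set stepD : P → P → Prop := fun x y => ∃ b ∈ B, f b = x ∧ R y b with hstepD
        have hop : stepD a₂ a₁ := ⟨b₀, hb₀B, hfb₀, ha₁R⟩
        have transferStep : ∀ x y, (∃ b ∈ B', f' b = x ∧ R' y b) →
            Relation.ReflTransGen stepD x y := by
          rintro x y ⟨b, hb, hfb, hR'⟩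
          obtain ⟨hbne, hbB⟩ := Finset.mem_erase.mp hb
          have hfx : f b = x := by rw [hfeq b hbne]; exact hfb
          rcases hR' with ⟨hRy, _⟩ | ⟨rfl, hRa₂⟩
          · exact ReflTransGen.single ⟨b, hbB, hfx, hRy⟩
          · exact ReflTransGen.head ⟨b, hbB, hfx, hRa₂⟩ (ReflTransGen.single hop)
        have transfer : ∀ x y,
            Relation.ReflTransGen (fun x y => ∃ b ∈ B', f' b = x ∧ R' y b) x y →
            Relation.ReflTransGen stepD x y := by
          intro x y h
          induction h with
          | refl => exact .refl
          | tail _ h2seg ihh => exact ihh.trans (transferStep _ _ h2seg)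
        intro a ha a' ha'
        by_cases h2a : a = a₂
        · by_cases h2a' : a' = a₂
          · rw [h2a, h2a']
          · subst h2a
            exact ReflTransGen.head hop
              (transfer a₁ a' (hf'SC a₁ ha₁A' a' (Finset.mem_erase.mpr ⟨h2a', ha'⟩)))
        · by_cases h2a' : a' = a₂
          · subst h2a'
            have hw : f' bp ∈ A' := hf'A bp hbpB'
            have hreach : Relation.ReflTransGen stepD a (f' bp) :=
              transfer _ _ (hf'SC a (Finset.mem_erase.mpr ⟨h2a, ha⟩) _ hw)
            exact hreach.tail ⟨bp, hbpB, hfeq bp hbpne, hbpR⟩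
          · exact transfer _ _ (hf'SC a (Finset.mem_erase.mpr ⟨h2a, ha⟩) a'
              (Finset.mem_erase.mpr ⟨h2a', ha'⟩))

/-- **Theorem 2 (poset version).** Let `A, B` be antichains of a finite partially
ordered set `P` with `|A| ≤ |B|` and `A ≤ B` (each element of `A` is below some
element of `B` and each element of `B` is above some element of `A`). Then there is
a surjection `f : B → A` such that for every lower set `X` of `P` with
`A ∩ X ≠ ∅` and `B ⊄ X`, there is `b ∈ B \ X` with `f b ∈ X`. -/
theorem stmt0 {P : Type*} [PartialOrder P] [Fintype P]
    (A B : Finset P)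
    (hA : IsAntichain (· ≤ ·) (A : Set P))
    (hB : IsAntichain (· ≤ ·) (B : Set P))
    (hcard : A.card ≤ B.card)
    (hAB₁ : ∀ a ∈ A, ∃ b ∈ B, a ≤ b)
    (hAB₂ : ∀ b ∈ B, ∃ a ∈ A, a ≤ b) :
    ∃ f : P → P, (∀ b ∈ B, f b ∈ A) ∧ (∀ a ∈ A, ∃ b ∈ B, f b = a) ∧
      ∀ X : Set P, IsLowerSet X → ((A : Set P) ∩ X).Nonempty → ¬ ((B : Set P) ⊆ X) →
        ∃ b ∈ B, b ∉ X ∧ f b ∈ X := by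
  classical
  by_cases hAemp : A = ∅
  · have hBemp : B = ∅ := by
      by_contra h
      obtain ⟨b, hb⟩ := Finset.nonempty_of_ne_empty h
      obtain ⟨a, ha, _⟩ := hAB₂ b hb
      simp [hAemp] at ha
    refine ⟨id, ?_, ?_, ?_⟩
    · intro b hb; simp [hBemp] at hb
    · intro a ha; simp [hAemp] at ha
    · intro X _ hne _
      obtain ⟨x, hx, _⟩ := hne
      simp [hAemp] at hx
  · obtain ⟨f, hfA, hfsurj, hSC⟩ :=
      key0 A.card A B (fun a b => a ≤ b) rfl (Finset.nonempty_of_ne_empty hAemp) hAB₁ hAB₂ hcard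
    refine ⟨f, hfA, hfsurj, ?_⟩
    intro X hX hAX hBX
    by_contra hcon
    push_neg at hcon
    obtain ⟨x, hxA, hxX⟩ := hAX
    obtain ⟨b₀, hb₀B, hb₀X⟩ := Set.not_subset.mp hBX
    have hxA' : x ∈ A := hxA
    have hb₀B' : b₀ ∈ B := hb₀B
    have hmem : ∀ a', Relation.ReflTransGen (fun x y => ∃ b ∈ B, f b = x ∧ y ≤ b) x a' →
        a' ∈ X := by
      intro a' h
      induction h with
      | refl => exact hxX
      | tail _ hseg ihh =>
        obtain ⟨b, hbB, hfb, hle⟩ := hseg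
        have hbX : b ∈ X := by
          by_contra hbX
          exact hcon b hbB hbX (hfb ▸ ihh)
        exact hX hle hbX
    have hfb₀A : f b₀ ∈ A := hfA b₀ hb₀B'
    have hfb₀X : f b₀ ∈ X := hmem (f b₀) (hSC x hxA' (f b₀) hfb₀A)
    have : b₀ ∈ X := by
      by_contra h
      exact hcon b₀ hb₀B' h hfb₀X
    exact hb₀X this
end

section
/- Let D be a finite distributive lattice with |D| ≥ 3, let A be its set of atoms and C its set of coatoms. Then D \ {⊥, ⊤} can be written as the union of max(|A|, |C|) closed intervals [a, c] with a ∈ A, c ∈ C (i.e., there exists a family of at most max(|A|,|C|) pairs (a,c) ∈ A × C whose intervals Icc a c have union D \ {⊥, ⊤}). -/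
/-!
A coatom `c` of a finite distributive lattice is inf-prime, so there is a least element
`minNotLe c` not below `c`, and `x ≤ c` fails iff `minNotLe c ≤ x`. Hence if `x ∉ {⊥, ⊤}` lies
in no `[a, c]` with `(a, c) ∈ F`, the atoms below `x` and the coatoms not above `x` form a set
closed under the arcs `a → c` for `(a, c) ∈ F` and `c → a` for `a ≤ minNotLe c`; it contains an
atom but misses a coatom. So it suffices to choose `F` through which every atom reaches every
coatom. Take a maximal matching `a i ≤ minNotLe (c i)`, `i < k`, close it into the cycle of pairs
`(a i, c (i + 1))`, and cover the unmatched atoms and coatoms by `max (|A| - k) (|C| - k)`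
further pairs: by maximality every atom and every coatom is adjacent to the matching.
-/

open Finset Function

open Fin.NatCast in
theorem Fin.forall_of_add_one {k : ℕ} [NeZero k] {P : Fin k → Prop} (h : ∀ i, P i → P (i + 1))
    {i : Fin k} (hi : P i) (j : Fin k) : P j := by
  have key : ∀ n : ℕ, P (i + n) := by
    intro n
    induction n with
    | zero => simpa using hi
    | succ n ih => simpa [Nat.cast_succ, add_assoc] using h _ ih
  simpa using key (j - i).val

theorem exists_cover_card_le_max {α β : Type*} [Nonempty α] [Nonempty β] (U : Finset α)
    (V : Finset β) :
    ∃ P : Finset (α × β), #P ≤ max #U #V ∧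
      (∀ x ∈ U, ∃ y, (x, y) ∈ P) ∧ ∀ y ∈ V, ∃ x, (x, y) ∈ P := by
  classical
  inhabit α
  inhabit β
  refine ⟨(range (max #U #V)).image fun i => (U.toList.getI i, V.toList.getI i),
    card_image_le.trans (card_range _).le, fun x hx => ?_, fun y hy => ?_⟩
  · obtain ⟨i, hi, rfl⟩ := List.getElem_of_mem (mem_toList.mpr hx)
    have : i < max #U #V := by rw [length_toList] at hi; omega
    exact ⟨_, mem_image.mpr ⟨i, mem_range.mpr this, Prod.ext (List.getI_eq_getElem _ hi) rfl⟩⟩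
  · obtain ⟨i, hi, rfl⟩ := List.getElem_of_mem (mem_toList.mpr hy)
    have : i < max #U #V := by rw [length_toList] at hi; omega
    exact ⟨_, mem_image.mpr ⟨i, mem_range.mpr this, Prod.ext rfl (List.getI_eq_getElem _ hi)⟩⟩

namespace Bipartite

variable {α β : Type*} (r : α → β → Prop)

theorem exists_maximal_matching [Fintype α] :
    ∃ (k : ℕ) (a : Fin k → α) (c : Fin k → β), Injective a ∧ Injective c ∧
      (∀ i, r (a i) (c i)) ∧ ∀ x y, r x y → x ∈ Set.range a ∨ y ∈ Set.range c := by
  classical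
  let IsMatching : ℕ → Prop := fun k => ∃ (a : Fin k → α) (c : Fin k → β),
    Injective a ∧ Injective c ∧ ∀ i, r (a i) (c i)
  have hle : ∀ k, IsMatching k → k ≤ Fintype.card α := by
    rintro k ⟨a, -, ha, -⟩
    simpa using Fintype.card_le_of_injective a ha
  have h0 : IsMatching 0 := ⟨Fin.elim0, Fin.elim0, injective_of_subsingleton _,
    injective_of_subsingleton _, fun i => i.elim0⟩
  obtain ⟨a, c, ha, hc, hr⟩ := Nat.findGreatest_spec (Nat.zero_le _) h0
  refine ⟨_, a, c, ha, hc, hr, fun x y hxy => ?_⟩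
  by_contra! hfree
  have hlarger : IsMatching (Nat.findGreatest IsMatching (Fintype.card α) + 1) :=
    ⟨Fin.cons x a, Fin.cons y c, Fin.cons_injective_iff.mpr ⟨hfree.1, ha⟩,
      Fin.cons_injective_iff.mpr ⟨hfree.2, hc⟩, Fin.cases hxy hr⟩
  exact Nat.findGreatest_is_greatest (Nat.lt_succ_self _) (hle _ hlarger) hlarger

/-- In the digraph on `α ⊕ β` with arcs `x → y` for `(x, y) ∈ F` and `y → x` for `r x y`,
every closed set meeting `α` contains `β`. -/
def Connects (F : Finset (α × β)) : Prop :=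
  ∀ (S : Set α) (T : Set β), (∀ p ∈ F, p.1 ∈ S → p.2 ∈ T) → (∀ x y, r x y → y ∈ T → x ∈ S) →
    S.Nonempty → T = Set.univ

variable {r}

theorem connects_of_cycle {k : ℕ} [NeZero k] {a : Fin k → α} {c : Fin k → β}
    (hr : ∀ i, r (a i) (c i)) (hα : ∀ x, ∃ i, r x (c i)) (hβ : ∀ y, ∃ i, r (a i) y)
    {F : Finset (α × β)} (hcycle : ∀ i, (a i, c (i + 1)) ∈ F)
    (hFα : ∀ x, ∃ y, (x, y) ∈ F) (hFβ : ∀ y, ∃ x, (x, y) ∈ F) : Connects r F := by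
  rintro S T hST hTS ⟨x₀, hx₀⟩
  have hstep : ∀ i, a i ∈ S → a (i + 1) ∈ S := fun i h => hTS _ _ (hr _) (hST _ (hcycle i) h)
  obtain ⟨i₀, hi₀⟩ : ∃ i, a i ∈ S := by
    obtain ⟨y, hy⟩ := hFα x₀
    obtain ⟨i, hi⟩ := hβ y
    exact ⟨i, hTS _ _ hi (hST _ hy hx₀)⟩
  have hcT : ∀ i, c i ∈ T := fun i => by
    simpa using hST _ (hcycle (i - 1)) (Fin.forall_of_add_one hstep hi₀ _)
  have hS : ∀ x, x ∈ S := fun x => by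
    obtain ⟨i, hi⟩ := hα x
    exact hTS _ _ hi (hcT i)
  refine Set.eq_univ_of_forall fun y => ?_
  obtain ⟨x, hx⟩ := hFβ y
  exact hST _ hx (hS x)

theorem exists_cycle_cover [Fintype α] [Fintype β] {k : ℕ} [NeZero k] {a : Fin k → α}
    {c : Fin k → β} (ha : Injective a) (hc : Injective c) : ∃ F : Finset (α × β),
      #F ≤ max (Fintype.card α) (Fintype.card β) ∧ (∀ i, (a i, c (i + 1)) ∈ F) ∧
      (∀ x, ∃ y, (x, y) ∈ F) ∧ ∀ y, ∃ x, (x, y) ∈ F := by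
  classical
  have : Nonempty α := ⟨a 0⟩
  have : Nonempty β := ⟨c 0⟩
  obtain ⟨P, hPcard, hPα, hPβ⟩ := exists_cover_card_le_max (univ.image a)ᶜ (univ.image c)ᶜ
  set cycle := univ.image fun i => (a i, c (i + 1))
  have hmem_cycle : ∀ i, (a i, c (i + 1)) ∈ cycle := fun i => mem_image_of_mem _ (mem_univ i)
  refine ⟨cycle ∪ P, ?_, fun i => mem_union_left _ (hmem_cycle i), fun x => ?_, fun y => ?_⟩
  · have hkα : k ≤ Fintype.card α := by simpa using Fintype.card_le_of_injective a ha
    have hkβ : k ≤ Fintype.card β := by simpa using Fintype.card_le_of_injective c hc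
    have hcycle_card : #cycle ≤ k := card_image_le.trans (by simp)
    rw [card_compl, card_compl, card_image_of_injective _ ha, card_image_of_injective _ hc,
      card_univ, Fintype.card_fin] at hPcard
    have := card_union_le cycle P
    omega
  · by_cases hx : x ∈ Set.range a
    · obtain ⟨i, rfl⟩ := hx
      exact ⟨_, mem_union_left _ (hmem_cycle i)⟩
    · obtain ⟨y, hy⟩ := hPα x (by simpa using hx)
      exact ⟨y, mem_union_right _ hy⟩
  · by_cases hy : y ∈ Set.range c
    · obtain ⟨i, rfl⟩ := hy
      exact ⟨a (i - 1), mem_union_left _ (by simpa using hmem_cycle (i - 1))⟩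
    · obtain ⟨x, hx⟩ := hPβ y (by simpa using hy)
      exact ⟨x, mem_union_right _ hx⟩

theorem exists_connects_card_le_max [Fintype α] [Fintype β] (hα : ∀ x, ∃ y, r x y)
    (hβ : ∀ y, ∃ x, r x y) :
    ∃ F : Finset (α × β), #F ≤ max (Fintype.card α) (Fintype.card β) ∧ Connects r F := by
  obtain ⟨k, a, c, ha, hc, hr, hmax⟩ := exists_maximal_matching r
  rcases Nat.eq_zero_or_pos k with rfl | hk
  · refine ⟨∅, by simp, ?_⟩
    rintro S T - - ⟨x, -⟩
    obtain ⟨y, hxy⟩ := hα x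
    simpa using hmax x y hxy
  have : NeZero k := ⟨hk.ne'⟩
  have hαc : ∀ x, ∃ i, r x (c i) := fun x => by
    obtain ⟨y, hxy⟩ := hα x
    rcases hmax x y hxy with ⟨i, rfl⟩ | ⟨i, rfl⟩
    exacts [⟨i, hr i⟩, ⟨i, hxy⟩]
  have hβa : ∀ y, ∃ i, r (a i) y := fun y => by
    obtain ⟨x, hxy⟩ := hβ y
    rcases hmax x y hxy with ⟨i, rfl⟩ | ⟨i, rfl⟩
    exacts [⟨i, hxy⟩, ⟨i, hr i⟩]
  obtain ⟨F, hcard, hcycle, hFα, hFβ⟩ := exists_cycle_cover ha hc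
  exact ⟨F, hcard, connects_of_cycle hr hαc hβa hcycle hFα hFβ⟩

end Bipartite

theorem IsCoatom.infIrred {L : Type*} [Lattice L] [OrderTop L] {c : L} (hc : IsCoatom c) :
    InfIrred c := by
  refine ⟨fun hmax => hc.1 hmax.eq_top, fun b d hbd => ?_⟩
  rcases hc.le_iff.mp (hbd ▸ inf_le_left) with rfl | hb
  · rcases hc.le_iff.mp (hbd ▸ inf_le_right) with rfl | hd
    · exact absurd (by simpa using hbd.symm) hc.1
    · exact Or.inr hd
  · exact Or.inl hb

theorem IsAtom.supIrred {L : Type*} [Lattice L] [OrderBot L] {a : L} (ha : IsAtom a) :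
    SupIrred a :=
  infIrred_toDual.mp ha.dual.infIrred

section FiniteLattice

variable {L : Type*}

open scoped Classical in
noncomputable def minNotLe [Lattice L] [OrderTop L] [Fintype L] (c : L) : L :=
  (univ.filter (¬ · ≤ c)).inf id

theorem minNotLe_le_iff [Lattice L] [OrderTop L] [Fintype L] {c x : L} (hc : InfPrime c) :
    minNotLe c ≤ x ↔ ¬ x ≤ c := by
  classical
  refine ⟨fun h hx => ?_, fun hx => inf_le (f := id) (by simpa using hx)⟩
  obtain ⟨y, hy, hyc⟩ := hc.finset_inf_le.mp (h.trans hx)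
  exact (mem_filter.mp hy).2 hyc

theorem Icc_subset_sdiff_bot_top [PartialOrder L] [BoundedOrder L] {a c : L} (ha : IsAtom a)
    (hc : IsCoatom c) : Set.Icc a c ⊆ Set.univ \ {⊥, ⊤} := by
  rintro x ⟨hax, hxc⟩
  refine ⟨trivial, ?_⟩
  rintro (rfl | rfl)
  exacts [ha.1 (le_bot_iff.mp hax), hc.1 (top_le_iff.mp hxc)]

variable [DistribLattice L] [BoundedOrder L] [Fintype L]

theorem IsAtom.exists_isCoatom_le_minNotLe {a : L} (ha : IsAtom a) :
    ∃ c, IsCoatom c ∧ a ≤ minNotLe c := by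
  classical
  set m := (univ.filter (¬ a ≤ ·)).sup id
  have hm : ¬ a ≤ m := fun h => by
    obtain ⟨y, hy, hay⟩ := ha.supIrred.supPrime.le_finset_sup.mp h
    exact (mem_filter.mp hy).2 hay
  obtain ⟨c, hc, hmc⟩ := (eq_top_or_exists_le_coatom m).resolve_left fun h => hm (h ▸ le_top)
  refine ⟨c, hc, by_contra fun h => ?_⟩
  have : minNotLe c ≤ m := le_sup (f := id) (mem_filter.mpr ⟨mem_univ _, h⟩)
  exact (minNotLe_le_iff hc.infIrred.infPrime).mp (this.trans hmc) le_rfl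

theorem IsCoatom.exists_isAtom_le_minNotLe {c : L} (hc : IsCoatom c) :
    ∃ a, IsAtom a ∧ a ≤ minNotLe c :=
  (eq_bot_or_exists_atom_le _).resolve_left fun h =>
    (minNotLe_le_iff hc.infIrred.infPrime).mp h.le bot_le

theorem exists_mem_Icc_of_connects
    {F : Finset ({a : L // IsAtom a} × {c : L // IsCoatom c})}
    (hF : Bipartite.Connects (fun a c => a.1 ≤ minNotLe c.1) F) {x : L} (hbot : x ≠ ⊥)
    (htop : x ≠ ⊤) : ∃ p ∈ F, x ∈ Set.Icc p.1.1 p.2.1 := by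
  by_contra! hcov
  obtain ⟨a, ha, hax⟩ := (eq_bot_or_exists_atom_le x).resolve_left hbot
  obtain ⟨c, hc, hxc⟩ := (eq_top_or_exists_le_coatom x).resolve_left htop
  have hT := hF {a | a.1 ≤ x} {c | ¬ x ≤ c.1} (fun p hp hpx hxp => hcov p hp ⟨hpx, hxp⟩)
    (fun a c hac hc => hac.trans ((minNotLe_le_iff c.2.infIrred.infPrime).mpr hc)) ⟨⟨a, ha⟩, hax⟩
  exact (hT ▸ Set.mem_univ (⟨c, hc⟩ : {c : L // IsCoatom c})) hxc

end FiniteLattice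

theorem stmt1_general {D : Type*} [DistribLattice D] [Fintype D] [BoundedOrder D] :
    ∃ F : Finset (D × D),
      F.card ≤ max {a : D | IsAtom a}.ncard {c : D | IsCoatom c}.ncard ∧
      (∀ p ∈ F, IsAtom p.1 ∧ IsCoatom p.2) ∧
      (⋃ p ∈ F, Set.Icc p.1 p.2) = Set.univ \ {⊥, ⊤} := by
  classical
  obtain ⟨F, hcard, hF⟩ := Bipartite.exists_connects_card_le_max
    (r := fun (a : {a : D // IsAtom a}) (c : {c : D // IsCoatom c}) => a.1 ≤ minNotLe c.1)
    (fun a => let ⟨c, hc, hac⟩ := a.2.exists_isCoatom_le_minNotLe; ⟨⟨c, hc⟩, hac⟩)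
    (fun c => let ⟨a, ha, hac⟩ := c.2.exists_isAtom_le_minNotLe; ⟨⟨a, ha⟩, hac⟩)
  refine ⟨F.image fun p => (p.1.1, p.2.1), ?_, ?_, ?_⟩
  · exact (card_image_le.trans hcard).trans_eq (by simp only [← Nat.card_eq_fintype_card]; rfl)
  · simp only [mem_image]
    rintro _ ⟨p, -, rfl⟩
    exact ⟨p.1.2, p.2.2⟩
  · rw [Finset.set_biUnion_finset_image]
    refine Set.Subset.antisymm
      (Set.iUnion₂_subset fun p _ => Icc_subset_sdiff_bot_top p.1.2 p.2.2) fun x hx => ?_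
    obtain ⟨p, hp, hxp⟩ := exists_mem_Icc_of_connects hF (hx.2 <| .inl ·) (hx.2 <| .inr ·)
    exact Set.mem_biUnion hp hxp

/-- **Theorem 1.** Let `𝒜` be the atoms and `𝒞` the coatoms of a finite distributive
lattice `D` with `|D| ≥ 3`. Then `D \ {⊥, ⊤}` is the union of `max(|𝒜|, |𝒞|)`
intervals `[a, c]` with `a` an atom and `c` a coatom. -/
theorem stmt1 {D : Type*} [DistribLattice D] [Fintype D] [BoundedOrder D]
    (hcard : 3 ≤ Fintype.card D) :
    ∃ F : Finset (D × D),
      F.card ≤ max {a : D | IsAtom a}.ncard {c : D | IsCoatom c}.ncard ∧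
      (∀ p ∈ F, IsAtom p.1 ∧ IsCoatom p.2) ∧
      (⋃ p ∈ F, Set.Icc p.1 p.2) = Set.univ \ {⊥, ⊤} :=
  stmt1_general
end

section
/- Let D be a finite distributive lattice. For a join-irreducible element b of D, let b̄ denote the supremum of {x ∈ D : ¬(b ≤ x)} (the largest element of D not above b). Let 𝒜 and ℬ be antichains of join-irreducible elements of D with 2 ≤ |𝒜| ≤ |ℬ| and 𝒜 ≤ ℬ. Then the set [𝒜, ℬ̄] = {x ∈ D : ∃ a ∈ 𝒜, ∃ b ∈ ℬ, a ≤ x ≤ b̄} is the union of |ℬ| closed intervals of the form [a, b̄] with a ∈ 𝒜 and b ∈ ℬ; more precisely, there is a function g : ℬ → 𝒜 with ⋃_{b ∈ ℬ} Icc (g b) b̄ = [𝒜, ℬ̄]. -/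
/-!
For `b` join-irreducible, `x ≤ b̄ ↔ ¬ b ≤ x`. So it suffices to find `g : ℬ → 𝒜` onto `𝒜` such
that the digraph on `ℬ` with an edge `b → b'` whenever `g b ≤ b'` is strongly connected. Given
`a ≤ x ≤ b̄₀`: if some `b₁ ∈ ℬ` lies below `x`, a path from `b₀` to `b₁` has an edge `b → b'` with
`¬ b ≤ x` and `b' ≤ x`, so `x ∈ [g b, b̄]`; otherwise `x ∈ [g b, b̄]` for any `b` with `g b = a`.

Such a `g` comes from a maximal matching between `𝒜` and `ℬ`: each matched `b` is sent to the
partner of the next matched element along a cycle, and the unmatched elements of `ℬ`, of which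
there are enough because `|𝒜| ≤ |ℬ|`, are sent onto the unmatched elements of `𝒜`. By maximality
every neighbour of an unmatched element is matched, which connects it to the cycle.
-/

open Finset Function Relation Equiv

theorem Relation.ReflTransGen.exists_rel_of_pred_of_not_pred {β : Type*} {R : β → β → Prop}
    {P : β → Prop} {x y : β} (h : ReflTransGen R x y) (hx : P x) (hy : ¬ P y) :
    ∃ u v, R u v ∧ P u ∧ ¬ P v := by
  induction h with
  | refl => exact absurd hx hy
  | @tail u v _ huv ih =>
    by_cases hu : P u
    · exact ⟨u, v, huv, hu, hy⟩
    · exact ih hu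

theorem Finset.exists_surjOn_of_card_le {α β : Type*} [Nonempty α] {s : Finset β} {t : Finset α}
    (h : #t ≤ #s) : ∃ f : β → α, Set.SurjOn f s t := by
  rcases t.eq_empty_or_nonempty with rfl | ⟨a, ha⟩
  · exact ⟨fun _ => Classical.arbitrary α, by simp [Set.SurjOn]⟩
  obtain ⟨b, -⟩ := card_pos.1 ((card_pos.2 ⟨a, ha⟩).trans_le h)
  have : Nonempty β := ⟨b⟩
  obtain ⟨ι, hιmaps, hιinj⟩ := t.finite_toSet.exists_injOn_of_encard_le (t := (s : Set β))
    (by simpa [Set.encard_coe_eq_coe_finsetCard] using h)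
  exact ⟨invFunOn ι t, fun a ha => ⟨ι a, hιmaps ha, hιinj.leftInvOn_invFunOn ha⟩⟩

section Matching

variable {α β : Type*} (r : α → β → Prop)

def IsMatching (A : Finset α) (B₀ : Finset β) (p : β → α) : Prop :=
  Set.InjOn p B₀ ∧ ∀ b ∈ B₀, p b ∈ A ∧ r (p b) b

variable {r}

theorem IsMatching.insert [DecidableEq β] {A : Finset α} {B₀ : Finset β}
    {p : β → α} (hp : IsMatching r A B₀ p) {a : α} {b : β} (ha : a ∈ A) (hap : a ∉ p '' B₀)
    (hb : b ∉ B₀) (hab : r a b) : IsMatching r A (insert b B₀) (update p b a) := by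
  have heq : Set.EqOn (update p b a) p B₀ := fun x hx =>
    update_of_ne (ne_of_mem_of_not_mem hx hb) _ _
  refine ⟨?_, fun x hx => ?_⟩
  · rw [coe_insert, Set.injOn_insert (mod_cast hb), update_self, heq.image_eq]
    exact ⟨hp.1.congr heq.symm, hap⟩
  · rcases mem_insert.1 hx with rfl | hx
    · simpa using ⟨ha, hab⟩
    · rw [heq hx]
      exact hp.2 x hx

theorem exists_maximal_isMatching [Nonempty α] (A : Finset α) (B : Finset β) :
    ∃ B₀ ⊆ B, ∃ p, IsMatching r A B₀ p ∧
      ∀ a ∈ A, ∀ b ∈ B, r a b → a ∈ p '' B₀ ∨ b ∈ B₀ := by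
  classical
  have hempty : ∅ ∈ B.powerset.filter fun B₀ => ∃ p, IsMatching r A B₀ p :=
    mem_filter.2 ⟨empty_mem_powerset B, fun _ => Classical.arbitrary α, by simp [IsMatching]⟩
  obtain ⟨B₀, hB₀, hmax⟩ := exists_max_image _ card ⟨∅, hempty⟩
  obtain ⟨hB₀B, p, hp⟩ := mem_filter.1 hB₀
  refine ⟨B₀, mem_powerset.1 hB₀B, p, hp, fun a ha b hb hab => ?_⟩
  by_contra! h
  have hins := hmax (insert b B₀) (mem_filter.2 ⟨mem_powerset.2
    (insert_subset hb (mem_powerset.1 hB₀B)), _, hp.insert ha h.1 h.2 hab⟩)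
  rw [card_insert_of_notMem h.2] at hins
  omega

theorem IsMatching.exists_rel_of_maximal {A : Finset α} {B B₀ : Finset β} {p : β → α}
    (hp : IsMatching r A B₀ p) (hmax : ∀ a ∈ A, ∀ b ∈ B, r a b → a ∈ p '' B₀ ∨ b ∈ B₀)
    {a : α} (ha : a ∈ A) {b : β} (hb : b ∈ B) (hab : r a b) : ∃ w ∈ B₀, r a w := by
  rcases hmax a ha b hb hab with ⟨w, hw, rfl⟩ | hb₀
  exacts [⟨w, hw, (hp.2 w hw).2⟩, ⟨b, hb₀, hab⟩]

theorem Equiv.Perm.IsCycleOn.reflTransGen {σ : Perm β} {s : Finset β} (hσ : σ.IsCycleOn s)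
    {R : β → β → Prop} (hR : ∀ x ∈ s, R x (σ x)) {x y : β} (hx : x ∈ s) (hy : y ∈ s) :
    ReflTransGen R x y := by
  obtain ⟨k, -, rfl⟩ := hσ.exists_pow_eq hx hy
  clear hy
  induction k with
  | zero => exact .refl
  | succ k ih =>
    rw [pow_succ', Perm.mul_apply]
    exact ih.tail (hR _ (hσ.1.mapsTo.perm_pow k hx))

theorem exists_mapsTo_surjOn_reflTransGen [Nonempty α] {A : Finset α} {B : Finset β}
    (hA : ∀ a ∈ A, ∃ b ∈ B, r a b) (hB : ∀ b ∈ B, ∃ a ∈ A, r a b) (hcard : #A ≤ #B) :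
    ∃ g : β → α, Set.MapsTo g B A ∧ Set.SurjOn g B A ∧
      ∀ b ∈ B, ∀ b' ∈ B, ReflTransGen (fun u v => v ∈ B ∧ r (g u) v) b b' := by
  classical
  obtain ⟨B₀, hB₀B, p, hp, hmax⟩ := exists_maximal_isMatching (r := r) A B
  obtain ⟨σ, hσ, -⟩ := B₀.countable_toSet.exists_cycleOn
  choose! n hnA hnr using hB
  have hpA : B₀.image p ⊆ A := image_subset_iff.2 fun b hb => (hp.2 b hb).1
  obtain ⟨h, hh⟩ := exists_surjOn_of_card_le (s := B \ B₀) (t := A \ B₀.image p) <| by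
    rw [card_sdiff_of_subset hpA, card_sdiff_of_subset hB₀B, card_image_of_injOn hp.1]
    omega
  set g : β → α := fun b => if b ∈ B₀ then p (σ b) else if h b ∈ A then h b else n b with hg
  have hgB₀ : ∀ w ∈ B₀, g w = p (σ w) := fun w hw => if_pos hw
  have hσB₀ : ∀ w ∈ B₀, σ w ∈ B₀ := fun w hw => hσ.1.mapsTo hw
  have hmaps : Set.MapsTo g B A := by
    intro b hb
    simp only [hg]
    split_ifs with hb₀ hhb
    exacts [(hp.2 _ (hσB₀ b hb₀)).1, hhb, hnA b hb]
  refine ⟨g, hmaps, fun a ha => ?_, fun b hb b' hb' => ?_⟩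
  · by_cases hap : a ∈ B₀.image p
    · obtain ⟨w₁, hw₁, rfl⟩ := mem_image.1 hap
      obtain ⟨w, hw, rfl⟩ := hσ.1.surjOn hw₁
      exact ⟨w, hB₀B hw, hgB₀ w hw⟩
    · obtain ⟨b, hb, rfl⟩ := hh (mem_sdiff.2 ⟨ha, hap⟩)
      exact ⟨b, (mem_sdiff.1 hb).1, by simp [hg, (mem_sdiff.1 hb).2, mem_coe.1 ha]⟩
  set R : β → β → Prop := fun u v => v ∈ B ∧ r (g u) v
  have hcycle : ∀ w ∈ B₀, ∀ w' ∈ B₀, ReflTransGen R w w' := fun w hw w' hw' =>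
    hσ.reflTransGen (fun w hw => ⟨hB₀B (hσB₀ w hw), hgB₀ w hw ▸ (hp.2 _ (hσB₀ w hw)).2⟩) hw hw'
  obtain ⟨c, hc, hgbc⟩ := hA _ (hmaps hb)
  obtain ⟨w, hw, hbw⟩ := hp.exists_rel_of_maximal hmax (hmaps hb) hc hgbc
  obtain ⟨w', hw', hw'b'⟩ : ∃ w' ∈ B₀, ReflTransGen R w' b' := by
    by_cases hb'₀ : b' ∈ B₀
    · exact ⟨b', hb'₀, .refl⟩
    obtain ⟨w₁, hw₁, hnb⟩ := (hmax _ (hnA b' hb') b' hb' (hnr b' hb')).resolve_right hb'₀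
    obtain ⟨w', hw', rfl⟩ := hσ.1.surjOn hw₁
    exact ⟨w', hw', .single ⟨hb', by rw [hgB₀ w' hw', hnb]; exact hnr b' hb'⟩⟩
  exact ((ReflTransGen.single ⟨hB₀B hw, hbw⟩).trans (hcycle w hw w' hw')).trans hw'b'

end Matching

theorem SupIrred.le_sup_filter_not_le_iff {D : Type*} [DistribLattice D] [OrderBot D] [Fintype D]
    [DecidableRel ((· ≤ ·) : D → D → Prop)] {b : D} (hb : SupIrred b) {x : D} :
    x ≤ (univ.filter fun y => ¬ b ≤ y).sup id ↔ ¬ b ≤ x := by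
  refine ⟨fun hx hbx => ?_, fun h => le_sup (f := id) (mem_filter.2 ⟨mem_univ x, h⟩)⟩
  obtain ⟨y, hy, hby⟩ := hb.supPrime.le_finset_sup.1 (hbx.trans hx)
  exact (mem_filter.1 hy).2 hby

theorem stmt2_general {D : Type*} [DistribLattice D] [Fintype D] [BoundedOrder D]
    [DecidableRel ((· ≤ ·) : D → D → Prop)]
    (bar : D → D)
    (hbar : ∀ b : D, bar b = (Finset.univ.filter fun x : D => ¬ b ≤ x).sup id)
    (𝒜 ℬ : Finset D)
    (hℬirr : ∀ b ∈ ℬ, SupIrred b)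
    (hcard : 𝒜.card ≤ ℬ.card)
    (hle₁ : ∀ a ∈ 𝒜, ∃ b ∈ ℬ, a ≤ b) (hle₂ : ∀ b ∈ ℬ, ∃ a ∈ 𝒜, a ≤ b) :
    ∃ g : D → D, (∀ b ∈ ℬ, g b ∈ 𝒜) ∧
      (⋃ b ∈ ℬ, Set.Icc (g b) (bar b)) =
        {x : D | ∃ a ∈ 𝒜, ∃ b ∈ ℬ, a ≤ x ∧ x ≤ bar b} := by
  have : Nonempty D := ⟨⊥⟩
  obtain ⟨g, hg𝒜, hgsurj, hreach⟩ := exists_mapsTo_surjOn_reflTransGen hle₁ hle₂ hcard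
  have hle_bar : ∀ b ∈ ℬ, ∀ x, x ≤ bar b ↔ ¬ b ≤ x := fun b hb x =>
    hbar b ▸ (hℬirr b hb).le_sup_filter_not_le_iff
  refine ⟨g, hg𝒜, Set.Subset.antisymm ?_ ?_⟩
  · simp only [Set.iUnion_subset_iff]
    exact fun b hb x hx => ⟨g b, hg𝒜 hb, b, hb, hx⟩
  rintro x ⟨a, ha, b₀, hb₀, hax, hxb₀⟩
  suffices ∃ b ∈ ℬ, g b ≤ x ∧ ¬ b ≤ x by
    obtain ⟨b, hb, hgb, hbx⟩ := this
    exact Set.mem_biUnion hb ⟨hgb, (hle_bar b hb x).2 hbx⟩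
  by_cases hℬx : ∃ b₁ ∈ ℬ, b₁ ≤ x
  · obtain ⟨b₁, hb₁, hb₁x⟩ := hℬx
    obtain ⟨u, v, ⟨hv, hguv⟩, ⟨hu, hux⟩, hvx⟩ :=
      (hreach b₀ hb₀ b₁ hb₁).exists_rel_of_pred_of_not_pred (P := fun u => u ∈ ℬ ∧ ¬ u ≤ x)
        ⟨hb₀, (hle_bar b₀ hb₀ x).1 hxb₀⟩ (by simp [hb₁x])
    exact ⟨u, hu, hguv.trans (not_not.1 fun h => hvx ⟨hv, h⟩), hux⟩
  · push Not at hℬx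
    obtain ⟨b, hb, rfl⟩ := hgsurj ha
    exact ⟨b, hb, hax, hℬx b hb⟩

/-- **Theorem (distributive lattice version of Theorem 2).** Let `D` be a finite
distributive lattice, and for a join-irreducible `b` let `bar b` denote the largest
element of `D` not above `b` (the join of all elements not above `b`). Let `𝒜` and
`ℬ` be antichains of join-irreducible elements with `2 ≤ |𝒜| ≤ |ℬ|` and `𝒜 ≤ ℬ`.
Then `[𝒜, ℬ̄] = {x | ∃ a ∈ 𝒜, ∃ b ∈ ℬ, a ≤ x ≤ bar b}` is the union of `|ℬ|`
intervals `[g b, bar b]` with `g b ∈ 𝒜`. -/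
theorem stmt2 {D : Type*} [DistribLattice D] [Fintype D] [BoundedOrder D]
    [DecidableEq D] [DecidableRel ((· ≤ ·) : D → D → Prop)]
    (bar : D → D)
    (hbar : ∀ b : D, bar b = (Finset.univ.filter fun x : D => ¬ b ≤ x).sup id)
    (𝒜 ℬ : Finset D)
    (h𝒜irr : ∀ a ∈ 𝒜, SupIrred a) (hℬirr : ∀ b ∈ ℬ, SupIrred b)
    (h𝒜 : IsAntichain (· ≤ ·) (𝒜 : Set D)) (hℬ : IsAntichain (· ≤ ·) (ℬ : Set D))
    (h2 : 2 ≤ 𝒜.card) (hcard : 𝒜.card ≤ ℬ.card)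
    (hle₁ : ∀ a ∈ 𝒜, ∃ b ∈ ℬ, a ≤ b) (hle₂ : ∀ b ∈ ℬ, ∃ a ∈ 𝒜, a ≤ b) :
    ∃ g : D → D, (∀ b ∈ ℬ, g b ∈ 𝒜) ∧
      (⋃ b ∈ ℬ, Set.Icc (g b) (bar b)) =
        {x : D | ∃ a ∈ 𝒜, ∃ b ∈ ℬ, a ≤ x ∧ x ≤ bar b} :=
  stmt2_general bar hbar 𝒜 ℬ hℬirr hcard hle₁ hle₂
end

section
/- Let D be a finite distributive lattice, graded by the rank function r (the height function), and let A = {x ∈ D : r(x) = i} and B = {x ∈ D : r(x) = j} be two distinct levels of D satisfying A ≤ B and min(|A|, |B|) = 2. Then the convex set [A, B] = {x : ∃ a ∈ A, ∃ b ∈ B, a ≤ x ≤ b} is the union of max(|A|, |B|) closed intervals [a, b] with a ∈ A, b ∈ B. -/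
/-!
Work with the rank as an integer, `r : D → ℤ`, so that `-r` ranks the dual lattice; by duality
we may assume `|A| = 2`, say `A = {a₁, a₂}`, and `i < j`. Every element of rank at least `i`
lies above `a₁` or `a₂`, and the rank identity `r (x ⊔ y) + r (x ⊓ y) = r x + r y` forces
`r (a₁ ⊓ a₂) = i - 1`, hence `x ⊓ y = a₁ ⊓ a₂` whenever `x` lies above `a₁` only and `y` above
`a₂` only.

Each `b ∈ B` receives one interval `[a, b]`, with `a ∈ A`. An element `x` of rank between `i`
and `j` above `a₁` only can be missed only if every `b ∈ B` above `x` also lies above `a₂`.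
Such "trapped" elements are closed under joins, so they all lie below a single `u₁`; likewise
on the side of `a₂` below some `u₂`. The crux is that `u₁` and `u₂` have distinct upper bounds
`b₁ ≠ b₂` in `B`: were `b` the only element of `B` above either of them, then for any other
`b' ∈ B` we would get `b ≤ (b' ⊔ u₁) ⊓ (b' ⊔ u₂) = b' ⊔ (a₁ ⊓ a₂) = b'`. Giving `b₁` the
interval from `a₁` and every other `b ≥ a₂` the interval from `a₂` covers `[A, B]`.
-/

def IsRankFunction {D : Type*} [Preorder D] (r : D → ℤ) : Prop :=
  ∀ ⦃x y : D⦄, x ⋖ y → r y = r x + 1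

def IsTrapped {D : Type*} [Preorder D] (r : D → ℤ) (j : ℤ) (a a' x : D) : Prop :=
  a ≤ x ∧ ¬a' ≤ x ∧ r x ≤ j ∧ ∀ b, r b = j → x ≤ b → a' ≤ b

theorem exists_finset_iUnion_Icc_eq {D : Type*} [Preorder D] [Finite D] {A B S : Set D}
    (φ : D → D × D) (hφ : ∀ s ∈ S, (φ s).1 ∈ A ∧ (φ s).2 ∈ B)
    (hcov : ∀ x, (∃ a ∈ A, ∃ b ∈ B, a ≤ x ∧ x ≤ b) → ∃ s ∈ S, (φ s).1 ≤ x ∧ x ≤ (φ s).2) :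
    ∃ F : Finset (D × D), F.card ≤ S.ncard ∧ (∀ p ∈ F, p.1 ∈ A ∧ p.2 ∈ B) ∧
      (⋃ p ∈ F, Set.Icc p.1 p.2) = {x | ∃ a ∈ A, ∃ b ∈ B, a ≤ x ∧ x ≤ b} := by
  classical
  refine ⟨S.toFinite.toFinset.image φ, ?_, ?_, ?_⟩
  · rw [Set.ncard_eq_toFinset_card S]
    exact Finset.card_image_le
  · simpa using hφ
  · ext x
    simp only [Set.mem_iUnion, Set.mem_Icc, Finset.mem_image, Set.Finite.mem_toFinset]
    constructor
    · rintro ⟨_, ⟨s, hs, rfl⟩, hsx, hxs⟩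
      exact ⟨_, (hφ s hs).1, _, (hφ s hs).2, hsx, hxs⟩
    · intro hx
      obtain ⟨s, hs, hsx, hxs⟩ := hcov x hx
      exact ⟨_, ⟨s, hs, rfl⟩, hsx, hxs⟩

open OrderDual

namespace IsRankFunction

section PartialOrder

variable {D : Type*} [PartialOrder D] {r : D → ℤ}

theorem dual (hr : IsRankFunction r) : IsRankFunction fun x : Dᵒᵈ ↦ -r (ofDual x) :=
  fun _ _ h ↦ by dsimp only; rw [hr (ofDual_covBy_ofDual_iff.2 h)]; ring

variable [Finite D]

theorem strictMono (hr : IsRankFunction r) : StrictMono r := by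
  intro x y hxy
  induction x using WellFoundedGT.induction with
  | _ x ih =>
  obtain ⟨c, hxc, hcy⟩ := exists_covBy_le_of_lt hxy
  rcases hcy.eq_or_lt with rfl | hcy
  · rw [hr hxc]; omega
  · have := ih c hxc.lt hcy
    rw [hr hxc] at this; omega

theorem eq_of_le_of_rank_le (hr : IsRankFunction r) {x y : D} (hxy : x ≤ y) (h : r y ≤ r x) :
    x = y :=
  by_contra fun hne ↦ (hr.strictMono (hxy.lt_of_ne hne)).not_ge h

theorem not_le_of_rank_eq (hr : IsRankFunction r) {x y : D} (h : r x = r y) (hne : x ≠ y) :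
    ¬x ≤ y :=
  fun hle ↦ hne (hr.eq_of_le_of_rank_le hle h.ge)

theorem exists_mem_Icc_eq (hr : IsRankFunction r) {x z : D} {k : ℤ} (hxz : x ≤ z)
    (hxk : r x ≤ k) (hkz : k ≤ r z) : ∃ w ∈ Set.Icc x z, r w = k := by
  induction x using WellFoundedGT.induction with
  | _ x ih =>
  rcases hxk.eq_or_lt with hxk | hxk
  · exact ⟨x, ⟨le_rfl, hxz⟩, hxk⟩
  obtain ⟨c, hxc, hcz⟩ := exists_covBy_le_of_lt (hxz.lt_of_ne (by rintro rfl; omega))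
  obtain ⟨w, hw, hwk⟩ := ih c hxc.lt hcz (by rw [hr hxc]; omega)
  exact ⟨w, ⟨hxc.le.trans hw.1, hw.2⟩, hwk⟩

theorem le_of_unique_above (hr : IsRankFunction r) {x y b : D} {j : ℤ} (hx : r x ≤ j)
    (hb : ∀ w, r w = j → x ≤ w → w = b) (hxy : x ≤ y) (hy : j ≤ r y) : b ≤ y := by
  obtain ⟨w, hw, hwj⟩ := hr.exists_mem_Icc_eq hxy hx hy
  exact hb w hwj hw.1 ▸ hw.2

variable [BoundedOrder D]

theorem exists_le_of_le_rank (hr : IsRankFunction r) {i : ℤ} (hi : r ⊥ ≤ i) {x : D}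
    (hx : i ≤ r x) : ∃ a, r a = i ∧ a ≤ x := by
  obtain ⟨a, ha, hai⟩ := hr.exists_mem_Icc_eq bot_le hi hx
  exact ⟨a, hai, ha.2⟩

theorem exists_le_of_rank_le (hr : IsRankFunction r) {j : ℤ} (hj : j ≤ r ⊤) {x : D}
    (hx : r x ≤ j) : ∃ b, r b = j ∧ x ≤ b := by
  obtain ⟨b, hb, hbj⟩ := hr.exists_mem_Icc_eq le_top hx hj
  exact ⟨b, hbj, hb.1⟩

end PartialOrder

section ModularLattice

variable {D : Type*} [Lattice D] [IsModularLattice D] [Finite D] {r : D → ℤ}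

theorem sup_add_inf (hr : IsRankFunction r) (x y : D) : r (x ⊔ y) + r (x ⊓ y) = r x + r y := by
  induction x using WellFoundedLT.induction with
  | _ x ih =>
  by_cases hxy : x ≤ y
  · rw [sup_eq_right.2 hxy, inf_eq_left.2 hxy]; ring
  obtain ⟨c, hc, hcx⟩ := exists_le_covBy_of_lt (inf_le_left.lt_of_ne (mt inf_eq_left.1 hxy))
  have hcy : c ⊓ y = x ⊓ y := le_antisymm (inf_le_inf_right _ hcx.le) (le_inf hc inf_le_right)
  have hcov : c ⊔ y ⋖ x ⊔ y := by
    have hinf : x ⊓ (c ⊔ y) = c := by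
      rw [inf_comm, sup_inf_assoc_of_le _ hcx.le, inf_comm, sup_eq_left.2 hc]
    have := covBy_sup_of_inf_covBy_left (hinf ▸ hcx)
    rwa [← sup_assoc, sup_eq_left.2 hcx.le] at this
  have := ih c hcx.lt
  rw [hr hcov, hr hcx, ← hcy]
  linarith

end ModularLattice

section DistribLattice

variable {D : Type*} [DistribLattice D] [Finite D] {r : D → ℤ} {i j : ℤ} {a₁ a₂ : D}

theorem rank_inf_eq (hr : IsRankFunction r) (hA : ∀ x, r x = i ↔ x = a₁ ∨ x = a₂)
    (ha : a₁ ≠ a₂) : r (a₁ ⊓ a₂) = i - 1 := by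
  have h₁ : r a₁ = i := (hA a₁).2 (Or.inl rfl)
  have h₂ : r a₂ = i := (hA a₂).2 (Or.inr rfl)
  have hlt : r (a₁ ⊓ a₂) < i := h₁ ▸ hr.strictMono (inf_le_left.lt_of_ne fun h ↦
    hr.not_le_of_rank_eq (h₁.trans h₂.symm) ha (inf_eq_left.1 h))
  by_contra hne
  -- otherwise `[a₁ ⊓ a₂, a₁] × [a₁ ⊓ a₂, a₂]` would contain a third element of rank `i`
  obtain ⟨x, hx, hxr⟩ := hr.exists_mem_Icc_eq (k := r (a₁ ⊓ a₂) + 1)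
    (inf_le_left : a₁ ⊓ a₂ ≤ a₁) (by omega) (by omega)
  obtain ⟨y, hy, hyr⟩ := hr.exists_mem_Icc_eq (k := i - 1)
    (inf_le_right : a₁ ⊓ a₂ ≤ a₂) (by omega) (by omega)
  have hxy : x ⊓ y = a₁ ⊓ a₂ := le_antisymm (inf_le_inf hx.2 hy.2) (le_inf hx.1 hy.1)
  have hsup := hr.sup_add_inf x y
  rw [hxy] at hsup
  rcases (hA (x ⊔ y)).1 (by omega) with h | h
  · have := hr.strictMono.monotone (le_inf (h ▸ le_sup_right) hy.2 : y ≤ a₁ ⊓ a₂)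
    omega
  · have := hr.strictMono.monotone (le_inf hx.2 (h ▸ le_sup_left) : x ≤ a₁ ⊓ a₂)
    omega

variable [BoundedOrder D]

theorem le_or_le_of_le_rank (hr : IsRankFunction r) (hA : ∀ x, r x = i ↔ x = a₁ ∨ x = a₂)
    {x : D} (hx : i ≤ r x) : a₁ ≤ x ∨ a₂ ≤ x := by
  have hbot : r ⊥ ≤ i := (hA a₁).2 (Or.inl rfl) ▸ hr.strictMono.monotone bot_le
  obtain ⟨a, ha, hax⟩ := hr.exists_le_of_le_rank hbot hx
  rcases (hA a).1 ha with rfl | rfl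
  exacts [Or.inl hax, Or.inr hax]

theorem inf_eq_inf_of_not_le (hr : IsRankFunction r) (hA : ∀ x, r x = i ↔ x = a₁ ∨ x = a₂)
    (ha : a₁ ≠ a₂) {x y : D} (hx₁ : a₁ ≤ x) (hx₂ : ¬a₂ ≤ x) (hy₂ : a₂ ≤ y) (hy₁ : ¬a₁ ≤ y) :
    x ⊓ y = a₁ ⊓ a₂ := by
  have hlt : r (x ⊓ y) < i := by
    by_contra! h
    rcases le_or_le_of_le_rank hr hA h with h | h
    exacts [hy₁ (h.trans inf_le_right), hx₂ (h.trans inf_le_left)]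
  refine (hr.eq_of_le_of_rank_le (inf_le_inf hx₁ hy₂) ?_).symm
  rw [rank_inf_eq hr hA ha]
  omega

theorem supClosed_isTrapped (hr : IsRankFunction r) (hA : ∀ x, r x = i ↔ x = a₁ ∨ x = a₂)
    (ha : a₁ ≠ a₂) : SupClosed {x | IsTrapped r j a₁ a₂ x} := by
  rintro x ⟨hx₁, hx₂, hxj, hxb⟩ y ⟨hy₁, hy₂, -, -⟩
  have hrank : r a₁ = r a₂ := by rw [(hA a₁).2 (Or.inl rfl), (hA a₂).2 (Or.inr rfl)]
  have hinf : (x ⊔ y) ⊓ a₂ = a₁ ⊓ a₂ := by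
    have h₁₂ := hr.not_le_of_rank_eq hrank ha
    rw [inf_sup_right, inf_eq_inf_of_not_le hr hA ha hx₁ hx₂ le_rfl h₁₂,
      inf_eq_inf_of_not_le hr hA ha hy₁ hy₂ le_rfl h₁₂, sup_idem]
  have hsup : ¬a₂ ≤ x ⊔ y := fun h ↦ hr.not_le_of_rank_eq hrank.symm ha.symm
    (by rw [← inf_eq_right.2 h, hinf]; exact inf_le_left)
  refine ⟨hx₁.trans le_sup_left, hsup, ?_, fun b hb h ↦ hxb b hb (le_sup_left.trans h)⟩
  by_contra! h
  obtain ⟨b, hb, hbj⟩ := hr.exists_mem_Icc_eq le_sup_left hxj h.le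
  exact hsup ((hxb b hbj hb.1).trans hb.2)

theorem exists_isTrapped_le (hr : IsRankFunction r) (hA : ∀ x, r x = i ↔ x = a₁ ∨ x = a₂)
    (ha : a₁ ≠ a₂) (hij : i ≤ j) :
    ∃ u, a₁ ≤ u ∧ ¬a₂ ≤ u ∧ r u ≤ j ∧ ∀ x, IsTrapped r j a₁ a₂ x → x ≤ u := by
  rcases Set.eq_empty_or_nonempty {x | IsTrapped r j a₁ a₂ x} with hempty | hne
  · refine ⟨a₁, le_rfl, hr.not_le_of_rank_eq ?_ ha.symm, ?_, fun x hx ↦ ?_⟩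
    · rw [(hA a₁).2 (Or.inl rfl), (hA a₂).2 (Or.inr rfl)]
    · rw [(hA a₁).2 (Or.inl rfl)]; exact hij
    · exact absurd hx (Set.eq_empty_iff_forall_notMem.1 hempty x)
  obtain ⟨u, hu, humax⟩ := (Set.toFinite _).exists_maximal hne
  exact ⟨u, hu.1, hu.2.1, hu.2.2.1, fun x hx ↦
    le_sup_right.trans (humax (supClosed_isTrapped hr hA ha hu hx) le_sup_left)⟩

theorem exists_ne_upper_of_not_le (hr : IsRankFunction r) (hA : ∀ x, r x = i ↔ x = a₁ ∨ x = a₂)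
    (ha : a₁ ≠ a₂) (hij : i ≤ j) (hB : 1 < {x | r x = j}.ncard) {x₁ x₂ : D}
    (hx₁ : a₁ ≤ x₁) (hx₁' : ¬a₂ ≤ x₁) (hx₁j : r x₁ ≤ j)
    (hx₂ : a₂ ≤ x₂) (hx₂' : ¬a₁ ≤ x₂) (hx₂j : r x₂ ≤ j) :
    ∃ b₁ b₂, b₁ ≠ b₂ ∧ r b₁ = j ∧ r b₂ = j ∧ x₁ ≤ b₁ ∧ x₂ ≤ b₂ := by
  obtain ⟨b', hb'j, -⟩ := Set.exists_ne_of_one_lt_ncard hB a₁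
  have htop : j ≤ r ⊤ := hb'j ▸ hr.strictMono.monotone le_top
  obtain ⟨b₁, hb₁j, hxb₁⟩ := hr.exists_le_of_rank_le htop hx₁j
  obtain ⟨b₂, hb₂j, hxb₂⟩ := hr.exists_le_of_rank_le htop hx₂j
  by_contra! h
  have hu₁ : ∀ w, r w = j → x₁ ≤ w → w = b₂ := fun w hwj hw ↦
    by_contra fun hne ↦ h w b₂ hne hwj hb₂j hw hxb₂
  have hu₂ : ∀ w, r w = j → x₂ ≤ w → w = b₂ := fun w hwj hw ↦
    (hu₁ b₁ hb₁j hxb₁).symm ▸ by_contra fun hne ↦ h b₁ w (Ne.symm hne) hb₁j hwj hxb₁ hw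
  obtain ⟨b, hbj, hb⟩ := Set.exists_ne_of_one_lt_ncard hB b₂
  -- both `b ⊔ x₁` and `b ⊔ x₂` lie above `b₂`, hence so does `b ⊔ (x₁ ⊓ x₂) = b ⊔ (a₁ ⊓ a₂) = b`
  have hle : b₂ ≤ b := by
    have h₁ := hr.le_of_unique_above hx₁j hu₁ (le_sup_right : x₁ ≤ b ⊔ x₁)
      (hbj ▸ hr.strictMono.monotone le_sup_left)
    have h₂ := hr.le_of_unique_above hx₂j hu₂ (le_sup_right : x₂ ≤ b ⊔ x₂)
      (hbj ▸ hr.strictMono.monotone le_sup_left)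
    have hab : a₁ ⊓ a₂ ≤ b := by
      rcases le_or_le_of_le_rank hr hA (hbj ▸ hij : i ≤ r b) with h | h
      exacts [inf_le_left.trans h, inf_le_right.trans h]
    calc b₂ ≤ (b ⊔ x₁) ⊓ (b ⊔ x₂) := le_inf h₁ h₂
      _ = b ⊔ a₁ ⊓ a₂ := by rw [← sup_inf_left, inf_eq_inf_of_not_le hr hA ha hx₁ hx₁' hx₂ hx₂']
      _ = b := sup_eq_left.2 hab
  exact hb (hr.eq_of_le_of_rank_le hle (by rw [hbj, hb₂j])).symm

theorem exists_cover_of_lower_level_ncard_eq_two (hr : IsRankFunction r) (hij : i < j)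
    (hA : {x | r x = i}.ncard = 2) (hB : 1 < {x | r x = j}.ncard) :
    ∃ f : D → D, (∀ b, r (f b) = i) ∧
      ∀ x, i ≤ r x → r x ≤ j → ∃ b, r b = j ∧ f b ≤ x ∧ x ≤ b := by
  obtain ⟨a₁, a₂, ha, hA⟩ := Set.ncard_eq_two.1 hA
  have hA₁ : ∀ x, r x = i ↔ x = a₁ ∨ x = a₂ := fun x ↦ by simpa using Set.ext_iff.1 hA x
  have hA₂ : ∀ x, r x = i ↔ x = a₂ ∨ x = a₁ := fun x ↦ (hA₁ x).trans or_comm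
  obtain ⟨u₁, hu₁, hu₁', hu₁j, htrap₁⟩ := exists_isTrapped_le hr hA₁ ha hij.le
  obtain ⟨u₂, hu₂, hu₂', hu₂j, htrap₂⟩ := exists_isTrapped_le hr hA₂ ha.symm hij.le
  obtain ⟨b₁, b₂, hne, hb₁j, hb₂j, hub₁, hub₂⟩ :=
    exists_ne_upper_of_not_le hr hA₁ ha hij.le hB hu₁ hu₁' hu₁j hu₂ hu₂' hu₂j
  have htop : j ≤ r ⊤ := hb₁j ▸ hr.strictMono.monotone le_top
  classical
  set f : D → D := fun b ↦ if b = b₁ ∨ ¬a₂ ≤ b then a₁ else a₂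
  have hf₁ : ∀ b, b = b₁ ∨ ¬a₂ ≤ b → f b = a₁ := fun b hb ↦ if_pos hb
  have hf₂ : ∀ b, b ≠ b₁ → a₂ ≤ b → f b = a₂ := fun b hb₁ hb₂ ↦ if_neg (by tauto)
  have hb₁ : ∀ b, ¬a₁ ≤ b → b ≠ b₁ := by rintro b hb rfl; exact hb (hu₁.trans hub₁)
  have hfA : ∀ b, f b = a₁ ∨ f b = a₂ := fun b ↦ by
    by_cases hb : b = b₁ ∨ ¬a₂ ≤ b
    exacts [Or.inl (if_pos hb), Or.inr (if_neg hb)]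
  refine ⟨f, fun b ↦ (hA₁ _).2 (hfA b), fun x hix hxj ↦ ?_⟩
  by_cases hx₁ : a₁ ≤ x <;> by_cases hx₂ : a₂ ≤ x
  · obtain ⟨b, hbj, hxb⟩ := hr.exists_le_of_rank_le htop hxj
    exact ⟨b, hbj, (hfA b).elim (· ▸ hx₁) (· ▸ hx₂), hxb⟩
  · by_cases htrap : IsTrapped r j a₁ a₂ x
    · exact ⟨b₁, hb₁j, (hf₁ b₁ (Or.inl rfl)).symm ▸ hx₁, (htrap₁ x htrap).trans hub₁⟩
    · obtain ⟨b, hbj, hxb, hb⟩ : ∃ b, r b = j ∧ x ≤ b ∧ ¬a₂ ≤ b := by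
        simpa [IsTrapped, hx₁, hx₂, hxj] using htrap
      exact ⟨b, hbj, (hf₁ b (Or.inr hb)).symm ▸ hx₁, hxb⟩
  · by_cases htrap : IsTrapped r j a₂ a₁ x
    · exact ⟨b₂, hb₂j, (hf₂ b₂ hne.symm (hu₂.trans hub₂)).symm ▸ hx₂,
        (htrap₂ x htrap).trans hub₂⟩
    · obtain ⟨b, hbj, hxb, hb⟩ : ∃ b, r b = j ∧ x ≤ b ∧ ¬a₁ ≤ b := by
        simpa [IsTrapped, hx₁, hx₂, hxj] using htrap
      exact ⟨b, hbj, (hf₂ b (hb₁ b hb) (hx₂.trans hxb)).symm ▸ hx₂, hxb⟩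
  · exact ((le_or_le_of_le_rank hr hA₁ hix).elim hx₁ hx₂).elim

theorem exists_cover_of_upper_level_ncard_eq_two (hr : IsRankFunction r) (hij : i < j)
    (hA : 1 < {x | r x = i}.ncard) (hB : {x | r x = j}.ncard = 2) :
    ∃ g : D → D, (∀ a, r (g a) = j) ∧
      ∀ x, i ≤ r x → r x ≤ j → ∃ a, r a = i ∧ a ≤ x ∧ x ≤ g a := by
  obtain ⟨g, hg, hcov⟩ := hr.dual.exists_cover_of_lower_level_ncard_eq_two (i := -j) (j := -i)
    (neg_lt_neg hij) (by simp only [neg_inj]; exact hB) (by simp only [neg_inj]; exact hA)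
  refine ⟨fun a ↦ ofDual (g (toDual a)), fun a ↦ by simpa using hg (toDual a), fun x hix hxj ↦ ?_⟩
  obtain ⟨a, ha, hga, hax⟩ := hcov (toDual x) (by simpa using hxj) (by simpa using hix)
  exact ⟨ofDual a, by simpa using ha, hax, hga⟩

theorem exists_finset_iUnion_Icc_eq_of_min_eq_two (hr : IsRankFunction r) (hij : i < j)
    (hmin : min {x | r x = i}.ncard {x | r x = j}.ncard = 2) :
    ∃ F : Finset (D × D), F.card ≤ max {x | r x = i}.ncard {x | r x = j}.ncard ∧
      (∀ p ∈ F, r p.1 = i ∧ r p.2 = j) ∧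
      (⋃ p ∈ F, Set.Icc p.1 p.2) = {x | ∃ a, r a = i ∧ ∃ b, r b = j ∧ a ≤ x ∧ x ≤ b} := by
  have hband : ∀ x, (∃ a ∈ {x | r x = i}, ∃ b ∈ {x | r x = j}, a ≤ x ∧ x ≤ b) →
      i ≤ r x ∧ r x ≤ j := by
    rintro x ⟨a, rfl, b, rfl, hax, hxb⟩
    exact ⟨hr.strictMono.monotone hax, hr.strictMono.monotone hxb⟩
  rcases (by omega : {x | r x = i}.ncard = 2 ∧ 1 < {x | r x = j}.ncard ∨
    1 < {x | r x = i}.ncard ∧ {x | r x = j}.ncard = 2) with ⟨hA, hB⟩ | ⟨hA, hB⟩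
  · obtain ⟨f, hf, hcov⟩ := hr.exists_cover_of_lower_level_ncard_eq_two hij hA hB
    obtain ⟨F, hF, hFAB, hFcov⟩ := exists_finset_iUnion_Icc_eq (S := {x | r x = j})
      (fun b ↦ (f b, b)) (fun b hb ↦ ⟨hf b, hb⟩) fun x hx ↦ by
        obtain ⟨b, hb, hbx, hxb⟩ := hcov x (hband x hx).1 (hband x hx).2
        exact ⟨b, hb, hbx, hxb⟩
    exact ⟨F, hF.trans (le_max_right _ _), hFAB, by simpa using hFcov⟩
  · obtain ⟨g, hg, hcov⟩ := hr.exists_cover_of_upper_level_ncard_eq_two hij hA hB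
    obtain ⟨F, hF, hFAB, hFcov⟩ := exists_finset_iUnion_Icc_eq (S := {x | r x = i})
      (fun a ↦ (a, g a)) (fun a ha ↦ ⟨ha, hg a⟩) fun x hx ↦ by
        obtain ⟨a, ha, hax, hxa⟩ := hcov x (hband x hx).1 (hband x hx).2
        exact ⟨a, ha, hax, hxa⟩
    exact ⟨F, hF.trans (le_max_left _ _), hFAB, by simpa using hFcov⟩

end DistribLattice

end IsRankFunction

theorem stmt3_general {D : Type*} [DistribLattice D] [Fintype D] [BoundedOrder D]
    (r : D → ℕ) (hrcov : ∀ x y : D, x ⋖ y → r y = r x + 1)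
    (i j : ℕ) (hij : i ≠ j)
    (A B : Set D) (hA : A = {x : D | r x = i}) (hB : B = {x : D | r x = j})
    (hle₁ : ∀ a ∈ A, ∃ b ∈ B, a ≤ b)
    (hmin : min A.ncard B.ncard = 2) :
    ∃ F : Finset (D × D),
      F.card ≤ max A.ncard B.ncard ∧
      (∀ p ∈ F, p.1 ∈ A ∧ p.2 ∈ B) ∧
      (⋃ p ∈ F, Set.Icc p.1 p.2) = {x : D | ∃ a ∈ A, ∃ b ∈ B, a ≤ x ∧ x ≤ b} := by
  subst hA hB
  have hr : IsRankFunction fun x ↦ (r x : ℤ) := fun x y h ↦ by simp [hrcov x y h]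
  obtain ⟨a, ha : r a = i⟩ : {x | r x = i}.Nonempty := Set.nonempty_of_ncard_ne_zero (by omega)
  obtain ⟨b, hb : r b = j, hab⟩ := hle₁ a ha
  have hlt : (i : ℤ) < j := by
    have : r a ≤ r b := by exact_mod_cast hr.strictMono.monotone hab
    omega
  simpa using hr.exists_finset_iUnion_Icc_eq_of_min_eq_two hlt (by simpa using hmin)

/-- **Theorem 3.** Let `D` be a finite distributive lattice graded by the rank
function `r`, with distinct levels `A` and `B` satisfying `A ≤ B` and
`min(|A|, |B|) = 2`. Then `[A, B]` has a cover by `max(|A|, |B|)` intervals. -/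
theorem stmt3 {D : Type*} [DistribLattice D] [Fintype D] [BoundedOrder D]
    (r : D → ℕ) (hr0 : r ⊥ = 0) (hrcov : ∀ x y : D, x ⋖ y → r y = r x + 1)
    (i j : ℕ) (hij : i ≠ j)
    (A B : Set D) (hA : A = {x : D | r x = i}) (hB : B = {x : D | r x = j})
    (hle₁ : ∀ a ∈ A, ∃ b ∈ B, a ≤ b) (hle₂ : ∀ b ∈ B, ∃ a ∈ A, a ≤ b)
    (hmin : min A.ncard B.ncard = 2) :
    ∃ F : Finset (D × D),
      F.card ≤ max A.ncard B.ncard ∧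
      (∀ p ∈ F, p.1 ∈ A ∧ p.2 ∈ B) ∧
      (⋃ p ∈ F, Set.Icc p.1 p.2) = {x : D | ∃ a ∈ A, ∃ b ∈ B, a ≤ x ∧ x ≤ b} :=
  stmt3_general r hrcov i j hij A B hA hB hle₁ hmin
end

section
/- (Voigt–Wegener) The Boolean lattice of all subsets of an n-element set has the strong interval covering property: for all 0 ≤ j ≤ k ≤ n, the collection {S ⊆ [n] : j ≤ |S| ≤ k} is the union of max(C(n, j), C(n, k)) intervals [X, Y] = {S : X ⊆ S ⊆ Y} where |X| = j, |Y| = k and X ⊆ Y. -/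
/-!
By complementation it suffices to treat `j + k ≤ n`. Splitting off one point of the ground set,
covers of the levels `j..k` and `j+1..k+1` of `B(n)` combine into a cover of the levels
`j+1..k+1` of `B(n+1)` by `C(n,k) + C(n,k+1) = C(n+1,k+1)` intervals, so by induction only
`j = 0` and `j + k = n` remain, and the first is trivial.

For `j + k = n`, place the ground set on a cycle and read a `j`-set `X` as an `n`-periodic
lattice path on `ℤ`, stepping up at the positions of `X` and down elsewhere; it drifts down by
`n - 2j` per period. Its records, the down-steps after which the path reaches a new minimum,
are the down-steps left unmatched when every up-step is matched to a later down-step like a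
bracket. The running minimum falls by one exactly at a record, hence there are `n - 2j` records
per period and `[X, X ∪ records X]` is an interval from level `j` to level `k`. Conversely, for
`j ≤ |S| ≤ k`, repeatedly matching a letter of `S` with the next surviving letter outside `S`
yields `j` nested arcs; their starts form an `X ⊆ S` for which every other letter of `S` lies
outside all arcs and is therefore a record.
-/

open Finset

namespace VoigtWegener

lemma sum_Ico_add_sum_Ico {α M : Type*} [LinearOrder α] [LocallyFiniteOrder α] [AddCommMonoid M]
    (f : α → M) {a b c : α} (hab : a ≤ b) (hbc : b ≤ c) :
    ∑ i ∈ Ico a b, f i + ∑ i ∈ Ico b c, f i = ∑ i ∈ Ico a c, f i := by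
  rw [← sum_union (Ico_disjoint_Ico_consecutive a b c), Ico_union_Ico_eq_Ico hab hbc]

section IntervalCover

variable {α β : Type*} {j k : ℕ}

structure IsIntervalCover (j k : ℕ) (F : Finset (Finset α × Finset α)) : Prop where
  interval : ∀ p ∈ F, #p.1 = j ∧ #p.2 = k ∧ p.1 ⊆ p.2
  cover : ∀ S : Finset α, j ≤ #S → #S ≤ k → ∃ p ∈ F, p.1 ⊆ S ∧ S ⊆ p.2

variable {F : Finset (Finset α × Finset α)}

lemma IsIntervalCover.biUnion_Icc_eq (hF : IsIntervalCover j k F) :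
    ⋃ p ∈ F, Set.Icc p.1 p.2 = {S : Finset α | j ≤ #S ∧ #S ≤ k} := by
  ext S
  simp only [Set.mem_iUnion, Set.mem_Icc, Set.mem_ofPred_eq, exists_prop]
  constructor
  · rintro ⟨p, hp, hpS, hSp⟩
    obtain ⟨hj, hk, -⟩ := hF.interval p hp
    exact ⟨hj ▸ card_le_card hpS, hk ▸ card_le_card hSp⟩
  · rintro ⟨hj, hk⟩
    exact hF.cover S hj hk

lemma IsIntervalCover.map_equiv (hF : IsIntervalCover j k F) (e : α ≃ β) :
    IsIntervalCover j k (F.map (e.finsetCongr.prodCongr e.finsetCongr).toEmbedding) where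
  interval := by
    simp only [mem_map_equiv]
    intro q hq
    obtain ⟨hj, hk, hsub⟩ := hF.interval _ hq
    simp only [Equiv.prodCongr_symm, Equiv.prodCongr_apply, Prod.map_fst, Prod.map_snd,
      Equiv.finsetCongr_symm, Equiv.finsetCongr_apply, card_map] at hj hk hsub
    exact ⟨hj, hk, map_subset_map.1 hsub⟩
  cover S hj hk := by
    obtain ⟨p, hp, hpS, hSp⟩ := hF.cover (e.symm.finsetCongr S) (by simpa) (by simpa)
    refine ⟨_, mem_map_of_mem _ hp, ?_, ?_⟩
    · simpa [Equiv.finsetCongr_apply, map_map] using (map_subset_map (f := e.toEmbedding)).2 hpS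
    · simpa [Equiv.finsetCongr_apply, map_map] using (map_subset_map (f := e.toEmbedding)).2 hSp

lemma IsIntervalCover.image_compl [Fintype α] [DecidableEq α]
    (hF : IsIntervalCover (Fintype.card α - k) (Fintype.card α - j) F)
    (hj : j ≤ Fintype.card α) (hk : k ≤ Fintype.card α) :
    IsIntervalCover j k (F.image fun p => (p.2ᶜ, p.1ᶜ)) where
  interval := by
    simp only [mem_image, forall_exists_index, and_imp, forall_apply_eq_imp_iff₂]
    intro p hp
    obtain ⟨h1, h2, h12⟩ := hF.interval p hp
    exact ⟨by rw [card_compl, h2]; omega, by rw [card_compl, h1]; omega, compl_subset_compl.2 h12⟩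
  cover S h1 h2 := by
    have hS := card_le_univ S
    obtain ⟨p, hp, hpS, hSp⟩ := hF.cover Sᶜ (by rw [card_compl]; omega) (by rw [card_compl]; omega)
    exact ⟨_, mem_image_of_mem _ hp, compl_le_iff_compl_le.1 hSp, le_compl_iff_le_compl.1 hpS⟩

lemma IsIntervalCover.option [DecidableEq α] {F₁ F₂ : Finset (Finset α × Finset α)}
    (h₁ : IsIntervalCover j k F₁) (h₂ : IsIntervalCover (j + 1) (k + 1) F₂) :
    IsIntervalCover (j + 1) (k + 1)
      (F₁.image (fun p => (insertNone p.1, insertNone p.2)) ∪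
        F₂.image (fun p => (p.1.map .some, p.2.map .some))) where
  interval := by
    simp only [mem_union, mem_image]
    rintro _ (⟨p, hp, rfl⟩ | ⟨p, hp, rfl⟩)
    · obtain ⟨h1, h2, h12⟩ := h₁.interval p hp
      exact ⟨by rw [card_insertNone, h1], by rw [card_insertNone, h2], insertNone.monotone h12⟩
    · obtain ⟨h1, h2, h12⟩ := h₂.interval p hp
      exact ⟨by rw [card_map, h1], by rw [card_map, h2], map_subset_map.2 h12⟩
  cover S hj hk := by
    by_cases hS : none ∈ S
    · have hcard := card_eraseNone_of_mem hS
      have hS' : insertNone (eraseNone S) = S := by rw [insertNone_eraseNone, insert_eq_of_mem hS]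
      obtain ⟨p, hp, hpS, hSp⟩ := h₁.cover (eraseNone S) (by omega) (by omega)
      exact ⟨_, mem_union_left _ (mem_image_of_mem _ hp), hS' ▸ insertNone.monotone hpS,
        hS' ▸ insertNone.monotone hSp⟩
    · have hcard := card_eraseNone_of_not_mem hS
      have hS' : (eraseNone S).map .some = S := by rw [map_some_eraseNone, erase_eq_of_notMem hS]
      obtain ⟨p, hp, hpS, hSp⟩ := h₂.cover (eraseNone S) (by omega) (by omega)
      exact ⟨_, mem_union_right _ (mem_image_of_mem _ hp), hS' ▸ map_subset_map.2 hpS,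
        hS' ▸ map_subset_map.2 hSp⟩

lemma exists_isIntervalCover_zero [Fintype α] [DecidableEq α] (hk : k ≤ Fintype.card α) :
    ∃ F : Finset (Finset α × Finset α), #F ≤ (Fintype.card α).choose k ∧ IsIntervalCover 0 k F := by
  refine ⟨(powersetCard k univ).image fun Y => (∅, Y), ?_, ⟨?_, fun S _ hS => ?_⟩⟩
  · exact card_image_le.trans (by rw [card_powersetCard, card_univ])
  · simp only [mem_image, mem_powersetCard_univ, forall_exists_index, and_imp,
      forall_apply_eq_imp_iff₂]
    exact fun Y hY => ⟨card_empty, hY, empty_subset Y⟩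
  · obtain ⟨Y, hSY, hY⟩ := exists_superset_card_eq hS (by simpa using hk)
    exact ⟨_, mem_image_of_mem _ (mem_powersetCard_univ.2 hY), empty_subset S, hSY⟩

end IntervalCover

section LatticePath

variable {n : ℕ}

lemma intCast_injOn_Ico (a : ℤ) : Set.InjOn (Int.cast : ℤ → ZMod n) (Ico a (a + n)) := by
  intro s hs t ht hst
  simp only [coe_Ico, Set.mem_Ico] at hs ht
  have hdvd : (n : ℤ) ∣ t - s := (ZMod.intCast_eq_intCast_iff_dvd_sub s t n).1 hst
  have := Int.eq_zero_of_abs_lt_dvd hdvd (abs_lt.2 ⟨by linarith, by linarith⟩)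
  linarith

lemma natCast_injOn_range : Set.InjOn (Nat.cast : ℕ → ZMod n) (range n) := by
  intro a ha b hb hab
  simpa [ZMod.val_natCast, Nat.mod_eq_of_lt (mem_range.1 ha), Nat.mod_eq_of_lt (mem_range.1 hb)]
    using congrArg ZMod.val hab

variable (X : Finset (ZMod n))

def step (t : ℤ) : ℤ := if (t : ZMod n) ∈ X then 1 else -1

noncomputable def height (t : ℤ) : ℤ := ∑ i ∈ Ico 0 t, step X i - ∑ i ∈ Ico t 0, step X i

lemma height_sub_height {a b : ℤ} (hab : a ≤ b) :
    height X b - height X a = ∑ i ∈ Ico a b, step X i := by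
  unfold height
  rcases le_total 0 a with ha | ha
  · rw [Ico_eq_empty_of_le ha, Ico_eq_empty_of_le (ha.trans hab), ← sum_Ico_add_sum_Ico _ ha hab]
    simp
  rcases le_total b 0 with hb | hb
  · rw [Ico_eq_empty_of_le ha, Ico_eq_empty_of_le hb, ← sum_Ico_add_sum_Ico _ hab hb]
    simp
  · rw [Ico_eq_empty_of_le ha, Ico_eq_empty_of_le hb, ← sum_Ico_add_sum_Ico _ ha hb]
    simp only [sum_empty]
    ring

lemma height_add_one (t : ℤ) : height X (t + 1) = height X t + step X t := by
  rw [← sub_eq_iff_eq_add', height_sub_height X (by omega), Ico_add_one_right_eq_Icc, Icc_self,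
    sum_singleton]

lemma sum_step_eq_card_sub_card (s : Finset ℤ) :
    ∑ i ∈ s, step X i =
      #{i ∈ s | ((i : ℤ) : ZMod n) ∈ X} - #{i ∈ s | ((i : ℤ) : ZMod n) ∉ X} := by
  simp [step, sum_ite, sub_eq_add_neg]

def IsRecord (p : ℤ) : Prop := ∀ a ≤ p, height X (p + 1) < height X a

open Classical in
noncomputable def records : Finset (ZMod n) :=
  ((range n).filter fun i : ℕ => IsRecord X i).image Nat.cast

noncomputable def upper : Finset (ZMod n) := X ∪ records X

lemma notMem_of_isRecord {p : ℤ} (hp : IsRecord X p) : (p : ZMod n) ∉ X := by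
  intro hpX
  have := hp p le_rfl
  rw [height_add_one, step, if_pos hpX] at this
  omega

lemma disjoint_records : Disjoint X (records X) := by
  rw [disjoint_right]
  simp only [records, mem_image, mem_filter]
  rintro _ ⟨i, ⟨-, hi⟩, rfl⟩
  simpa using notMem_of_isRecord X hi

lemma subset_upper : X ⊆ upper X := subset_union_left

variable [NeZero n]

lemma mem_records_of_isRecord {v : ZMod n} (hv : IsRecord X (v.val : ℤ)) : v ∈ records X := by
  classical
  exact mem_image.2 ⟨v.val, mem_filter.2 ⟨mem_range.2 (ZMod.val_lt v), hv⟩, ZMod.natCast_zmod_val v⟩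

lemma image_intCast_Ico (a : ℤ) : (Ico a (a + n)).image (Int.cast : ℤ → ZMod n) = univ :=
  eq_univ_of_card _ <| by
    rw [card_image_of_injOn (intCast_injOn_Ico a), Int.card_Ico, ZMod.card]; omega

lemma height_add_period (t : ℤ) : height X (t + n) = height X t - (n - 2 * #X) := by
  have hsum : ∑ i ∈ Ico t (t + n), step X i = ∑ v : ZMod n, if v ∈ X then 1 else -1 := by
    rw [← image_intCast_Ico t, sum_image (intCast_injOn_Ico t)]
    rfl
  have hcompl : #{v | v ∉ X} = n - #X := by
    rw [filter_not, filter_mem_eq_inter, univ_inter, card_univ_sdiff, ZMod.card]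
  have hX : #X ≤ n := (card_le_univ X).trans_eq (ZMod.card n)
  have h := height_sub_height X (a := t) (b := t + n) (by omega)
  rw [hsum, sum_ite, sum_const, sum_const, hcompl] at h
  simp only [filter_mem_eq_inter, univ_inter, nsmul_eq_mul, mul_one, mul_neg] at h
  push_cast [hX] at h
  linarith

lemma height_add_mul_le (hX : 2 * #X ≤ n) (t : ℤ) (q : ℕ) : height X (t + q * n) ≤ height X t := by
  induction q with
  | zero => simp
  | succ q ih =>
    have := height_add_period X (t + q * n)
    push_cast at this ⊢
    rw [add_mul, one_mul, ← add_assoc, this]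
    have : (2 * #X : ℤ) ≤ n := by exact_mod_cast hX
    linarith

-- As `2 * #X ≤ n`, the path drifts down, so its minimum over all `a ≤ t` is attained in the
-- last period `(t - n, t]`.
noncomputable def runMin (t : ℤ) : ℤ :=
  (Ioc (t - n) t).inf' ⟨t, by simpa using NeZero.pos n⟩ (height X)

lemma exists_height_eq_runMin (t : ℤ) : ∃ a ≤ t, height X a = runMin X t := by
  obtain ⟨a, ha, h⟩ := exists_mem_eq_inf' (s := Ioc (t - n) t) ⟨t, by simpa using NeZero.pos n⟩
    (height X)
  exact ⟨a, (mem_Ioc.1 ha).2, h.symm⟩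

variable {X}

lemma runMin_le_height (hX : 2 * #X ≤ n) {a t : ℤ} (hat : a ≤ t) : runMin X t ≤ height X a := by
  have hn : (0 : ℤ) < n := by exact_mod_cast NeZero.pos n
  obtain ⟨q, hq⟩ : ∃ q : ℕ, (q : ℤ) = (t - a) / n :=
    ⟨((t - a) / n).toNat, Int.toNat_of_nonneg (Int.ediv_nonneg (by omega) hn.le)⟩
  have h1 := Int.mul_ediv_add_emod (t - a) n
  have h2 := Int.emod_nonneg (t - a) hn.ne'
  have h3 := Int.emod_lt_of_pos (t - a) hn
  calc runMin X t ≤ height X (a + q * n) :=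
        inf'_le _ (mem_Ioc.2 ⟨by rw [hq]; linarith, by rw [hq]; linarith⟩)
    _ ≤ height X a := height_add_mul_le X hX a q

lemma runMin_eq_of (hX : 2 * #X ≤ n) {t m : ℤ} (hle : ∀ a ≤ t, m ≤ height X a)
    (hex : ∃ a ≤ t, height X a = m) : runMin X t = m := by
  obtain ⟨a, ha, rfl⟩ := hex
  obtain ⟨b, hb, hb'⟩ := exists_height_eq_runMin X t
  exact le_antisymm (runMin_le_height hX ha) (hb' ▸ hle b hb)

lemma isRecord_iff_lt_runMin (hX : 2 * #X ≤ n) {p : ℤ} :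
    IsRecord X p ↔ height X (p + 1) < runMin X p := by
  refine ⟨fun h => ?_, fun h a ha => h.trans_le (runMin_le_height hX ha)⟩
  obtain ⟨a, ha, heq⟩ := exists_height_eq_runMin X p
  exact heq ▸ h a ha

lemma runMin_add_one (hX : 2 * #X ≤ n) (t : ℤ) :
    runMin X (t + 1) = min (runMin X t) (height X (t + 1)) := by
  refine runMin_eq_of hX (fun a ha => ?_) ?_
  · rcases (Int.le_add_one_iff.1 ha) with ha | rfl
    · exact min_le_of_left_le (runMin_le_height hX ha)
    · exact min_le_right _ _
  · rcases min_choice (runMin X t) (height X (t + 1)) with h | h <;> rw [h]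
    · obtain ⟨a, ha, heq⟩ := exists_height_eq_runMin X t
      exact ⟨a, by omega, heq⟩
    · exact ⟨t + 1, le_rfl, rfl⟩

lemma runMin_add_period (hX : 2 * #X ≤ n) (t : ℤ) :
    runMin X (t + n) = runMin X t - (n - 2 * #X) := by
  refine runMin_eq_of hX (fun a ha => ?_) ?_
  · have := height_add_period X (a - n)
    rw [sub_add_cancel] at this
    linarith [runMin_le_height hX (show a - n ≤ t by omega)]
  · obtain ⟨a, ha, heq⟩ := exists_height_eq_runMin X t
    exact ⟨a + n, by omega, by rw [height_add_period, heq]⟩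

open Classical in
lemma runMin_sub_runMin_add_one (hX : 2 * #X ≤ n) (t : ℤ) :
    runMin X t - runMin X (t + 1) = if IsRecord X t then 1 else 0 := by
  have hstep : height X t - 1 ≤ height X (t + 1) := by
    rw [height_add_one, step]; split_ifs <;> omega
  have hmin := runMin_le_height hX (le_refl t)
  rw [runMin_add_one hX, isRecord_iff_lt_runMin hX]
  split_ifs with h
  · rw [min_eq_right h.le]; omega
  · rw [min_eq_left (not_lt.1 h)]; omega

lemma card_records (hX : 2 * #X ≤ n) : #(records X) = n - 2 * #X := by
  classical
  rw [records, card_image_of_injOn (natCast_injOn_range.mono (coe_subset.2 (filter_subset _ _)))]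
  have htel := sum_range_sub' (fun i : ℕ => runMin X i) n
  simp only [Nat.cast_add, Nat.cast_one, runMin_sub_runMin_add_one hX] at htel
  have hper := runMin_add_period hX 0
  rw [zero_add] at hper
  zify [hX]
  rw [card_filter]
  push_cast
  simp only [Nat.cast_zero] at htel
  rw [htel, hper]
  ring

lemma card_upper (hX : 2 * #X ≤ n) : #(upper X) = n - #X := by
  rw [upper, card_union_of_disjoint (disjoint_records X), card_records hX]
  omega

end LatticePath

section ArcSystem

variable {n : ℕ}

-- Nested arcs `x ⟶ x + ℓ x` of the cyclic word on the letters of `A`, matching the starts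
-- `X ⊆ S` with ends in `A \ S` like brackets.
structure IsArcSystem (A S X : Finset (ZMod n)) (ℓ : ZMod n → ℕ) : Prop where
  subset : X ⊆ S
  end_mem : ∀ x ∈ X, x + ℓ x ∈ A \ S
  end_injOn : Set.InjOn (fun x => x + (ℓ x : ZMod n)) X
  inner : ∀ x ∈ X, ∀ i : ℕ, 0 < i → i < ℓ x → x + i ∉ A ∨ x + i ∈ X ∨ ∃ y ∈ X, x + i = y + ℓ y

lemma IsArcSystem.insert {A S X : Finset (ZMod n)} {ℓ : ZMod n → ℕ} {p : ZMod n} {e : ℕ}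
    (h : IsArcSystem ((A.erase p).erase (p + e)) (S.erase p) X ℓ) (hp : p ∈ S)
    (he : p + e ∈ A \ S) (hinner : ∀ i : ℕ, 0 < i → i < e → p + (i : ZMod n) ∉ A) :
    IsArcSystem A S (insert p X) (Function.update ℓ p e) := by
  have hpX : p ∉ X := fun hpX => (mem_erase.1 (h.subset hpX)).1 rfl
  have hℓ : ∀ x ∈ X, Function.update ℓ p e x = ℓ x := fun x hx =>
    Function.update_of_ne (ne_of_mem_of_not_mem hx hpX) _ _
  have hend : ∀ x ∈ X, x + ℓ x ∈ A \ S ∧ x + ℓ x ≠ p + e := by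
    intro x hx
    have := h.end_mem x hx
    simp only [mem_sdiff, mem_erase] at this ⊢
    tauto
  refine ⟨insert_subset hp (h.subset.trans (erase_subset _ _)), ?_, ?_, ?_⟩
  · simp only [forall_mem_insert, Function.update_self]
    exact ⟨he, fun x hx => hℓ x hx ▸ (hend x hx).1⟩
  · rw [coe_insert, Set.injOn_insert (mem_coe.not.2 hpX)]
    refine ⟨fun x hx y hy hxy => h.end_injOn hx hy ?_, ?_⟩
    · simpa only [hℓ x hx, hℓ y hy] using hxy
    · rintro ⟨x, hx, hxp⟩
      exact (hend x hx).2 (by simpa only [hℓ x hx, Function.update_self] using hxp)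
  · intro x hx i hi0 hi
    simp only [mem_insert]
    obtain rfl | hx := mem_insert.1 hx
    · rw [Function.update_self] at hi
      exact Or.inl (hinner i hi0 hi)
    rw [hℓ x hx] at hi
    rcases h.inner x hx i hi0 hi with hA | hX | ⟨y, hy, hxy⟩
    · by_cases hxp : x + i = p
      · exact Or.inr (Or.inl (Or.inl hxp))
      by_cases hxe : x + i = p + e
      · exact Or.inr (Or.inr ⟨p, Or.inl rfl, by rw [Function.update_self, hxe]⟩)
      · exact Or.inl fun hA' => hA (mem_erase.2 ⟨hxe, mem_erase.2 ⟨hxp, hA'⟩⟩)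
    · exact Or.inr (Or.inl (Or.inr hX))
    · exact Or.inr (Or.inr ⟨y, Or.inr hy, by rw [hℓ y hy]; exact hxy⟩)

variable [NeZero n]

lemma exists_adjacent {A S : Finset (ZMod n)} (hS : S.Nonempty) (hAS : (A \ S).Nonempty) :
    ∃ p ∈ S, ∃ e : ℕ, p + e ∈ A \ S ∧ ∀ i : ℕ, 0 < i → i < e → p + (i : ZMod n) ∉ A := by
  classical
  have hP : ∃ e : ℕ, ∃ p ∈ S, p + (e : ZMod n) ∈ A \ S := by
    obtain ⟨s, hs⟩ := hS
    obtain ⟨q, hq⟩ := hAS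
    exact ⟨(q - s).val, s, hs, by rwa [ZMod.natCast_zmod_val, add_sub_cancel]⟩
  obtain ⟨p, hp, he⟩ := Nat.find_spec hP
  refine ⟨p, hp, Nat.find hP, he, fun i hi0 hie hiA => ?_⟩
  by_cases hiS : p + (i : ZMod n) ∈ S
  · refine Nat.find_min hP (m := Nat.find hP - i) (by omega) ⟨_, hiS, ?_⟩
    rwa [Nat.cast_sub hie.le, add_assoc, add_sub_cancel]
  · exact Nat.find_min hP hie ⟨p, hp, mem_sdiff.2 ⟨hiA, hiS⟩⟩

lemma exists_isArcSystem (j : ℕ) : ∀ {A S : Finset (ZMod n)}, S ⊆ A → j ≤ #S → j ≤ #(A \ S) →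
    ∃ X ℓ, #X = j ∧ IsArcSystem A S X ℓ := by
  induction j with
  | zero => exact fun _ _ _ => ⟨∅, 0, rfl, ⟨empty_subset _, by simp, by simp, by simp⟩⟩
  | succ j ih =>
    intro A S hSA hS hAS
    obtain ⟨p, hp, e, he, hinner⟩ :=
      exists_adjacent (A := A) (S := S) (card_pos.1 (by omega)) (card_pos.1 (by omega))
    have hSA' : S.erase p ⊆ (A.erase p).erase (p + e) := by
      intro v hv
      have := hSA (mem_of_mem_erase hv)
      simp only [mem_erase, mem_sdiff] at hv he ⊢
      grind
    have hAS' : (A \ S).erase (p + e) ⊆ (A.erase p).erase (p + e) \ S.erase p := by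
      intro v hv
      simp only [mem_erase, mem_sdiff] at hv ⊢
      grind
    obtain ⟨X, ℓ, hX, h⟩ := ih hSA' (by rw [card_erase_of_mem hp]; omega)
      ((show j ≤ #((A \ S).erase (p + e)) by rw [card_erase_of_mem he]; omega).trans
        (card_le_card hAS'))
    have hpX : p ∉ X := fun hpX => (mem_erase.1 (h.subset hpX)).1 rfl
    exact ⟨insert p X, _, by rw [card_insert_of_notMem hpX, hX], h.insert hp he hinner⟩

lemma IsArcSystem.inner_univ {S X : Finset (ZMod n)} {ℓ : ZMod n → ℕ}
    (h : IsArcSystem univ S X ℓ) {x : ZMod n} (hx : x ∈ X) {i : ℕ} (hi0 : 0 < i) (hi : i < ℓ x) :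
    x + i ∈ X ∨ x + i ∉ S := by
  rcases h.inner x hx i hi0 hi with hA | hX | ⟨y, hy, hxy⟩
  · exact absurd (mem_univ _) hA
  · exact Or.inl hX
  · exact Or.inr (hxy ▸ (mem_sdiff.1 (h.end_mem y hy)).2)

-- Moving each start `t ∈ [a, s]` to the end of its arc injects the starts into the non-starts of
-- `[a, s)`, since no arc can contain the letter `s`.
lemma IsArcSystem.card_filter_mem_lt {S X : Finset (ZMod n)} {ℓ : ZMod n → ℕ}
    (h : IsArcSystem univ S X ℓ) {a s : ℤ} (has : a ≤ s) (hs : (s : ZMod n) ∈ S)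
    (hsX : (s : ZMod n) ∉ X) :
    #{t ∈ Ico a (s + 1) | ((t : ℤ) : ZMod n) ∈ X} <
      #{t ∈ Ico a (s + 1) | ((t : ℤ) : ZMod n) ∉ X} := by
  have hs' : s ∈ {t ∈ Ico a (s + 1) | ((t : ℤ) : ZMod n) ∉ X} := by simp [has, hsX]
  refine (card_le_card_of_injOn (fun t : ℤ => t + ℓ t) ?_ ?_).trans_lt (card_erase_lt_of_mem hs')
  · intro t ht
    simp only [coe_filter, mem_Ico, Set.mem_ofPred_eq] at ht
    obtain ⟨⟨hat, hts⟩, htX⟩ := ht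
    have hend := (mem_sdiff.1 (h.end_mem _ htX)).2
    have hts' : t < s := lt_of_le_of_ne (by omega) fun hts => hsX (hts ▸ htX)
    have hlt : t + ℓ t < s + 1 := by
      by_contra! hge
      have hcast : (t : ZMod n) + ((s - t).toNat : ℕ) = s := by
        rw [← Int.cast_natCast, Int.toNat_of_nonneg (by omega), ← Int.cast_add, add_sub_cancel]
      rcases h.inner_univ htX (i := (s - t).toNat) (by omega) (by omega) with hsX' | hsS
      · exact hsX (hcast ▸ hsX')
      · exact hsS (hcast ▸ hs)
    simp only [coe_erase, coe_filter, mem_Ico, Set.mem_sdiff, Set.mem_ofPred_eq,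
      Set.mem_singleton_iff, Int.cast_add, Int.cast_natCast]
    refine ⟨⟨⟨by omega, hlt⟩, fun hX => hend (h.subset hX)⟩, fun hsEq => hend ?_⟩
    rw [← hsEq] at hs
    simpa using hs
  · intro t ht t' ht' htt'
    simp only [coe_filter, mem_Ico, Set.mem_ofPred_eq] at ht ht'
    have hcast : (t : ZMod n) + ℓ t = (t' : ZMod n) + ℓ t' := by
      simpa using congrArg (Int.cast : ℤ → ZMod n) htt'
    have hx := h.end_injOn ht.2 ht'.2 hcast
    simp only at htt'
    rw [hx] at htt'
    omega

lemma IsArcSystem.isRecord {S X : Finset (ZMod n)} {ℓ : ZMod n → ℕ} (h : IsArcSystem univ S X ℓ)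
    {s : ℤ} (hs : (s : ZMod n) ∈ S) (hsX : (s : ZMod n) ∉ X) : IsRecord X s := by
  intro a has
  have hlt := h.card_filter_mem_lt has hs hsX
  rw [← sub_neg, height_sub_height X (by omega), sum_step_eq_card_sub_card]
  omega

theorem exists_subset_card_eq_subset_upper {S : Finset (ZMod n)} {j : ℕ} (hj : j ≤ #S)
    (hjS : #S + j ≤ n) : ∃ X ⊆ S, #X = j ∧ S ⊆ upper X := by
  obtain ⟨X, ℓ, hX, h⟩ :=
    exists_isArcSystem j (subset_univ S) hj (by rw [card_univ_sdiff, ZMod.card]; omega)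
  refine ⟨X, h.subset, hX, fun v hv => ?_⟩
  by_cases hvX : v ∈ X
  · exact subset_upper X hvX
  · exact mem_union_right _
      (mem_records_of_isRecord X (h.isRecord (by simpa using hv) (by simpa using hvX)))

theorem exists_isIntervalCover_zmod {j k : ℕ} (hjk : j ≤ k) (hn : j + k = n) :
    ∃ F : Finset (Finset (ZMod n) × Finset (ZMod n)), #F ≤ n.choose k ∧ IsIntervalCover j k F := by
  refine ⟨(powersetCard j univ).image fun X => (X, upper X), ?_, ⟨?_, fun S hj hk => ?_⟩⟩
  · exact card_image_le.trans
      (by rw [card_powersetCard, card_univ, ZMod.card, ← hn, Nat.choose_symm_add])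
  · simp only [mem_image, mem_powersetCard_univ, forall_exists_index, and_imp,
      forall_apply_eq_imp_iff₂]
    exact fun X hX => ⟨hX, by rw [card_upper (by omega), hX]; omega, subset_upper X⟩
  · obtain ⟨X, hXS, hX, hSX⟩ := exists_subset_card_eq_subset_upper hj (by omega)
    exact ⟨_, mem_image_of_mem _ (mem_powersetCard_univ.2 hX), hXS, hSX⟩

end ArcSystem

theorem exists_isIntervalCover_of_add_le (n : ℕ) : ∀ {j k : ℕ}, j ≤ k → j + k ≤ n →
    ∃ F : Finset (Finset (Fin n) × Finset (Fin n)), #F ≤ n.choose k ∧ IsIntervalCover j k F := by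
  induction n with
  | zero =>
    intro j k hjk hk
    obtain rfl : j = 0 := by omega
    simpa using exists_isIntervalCover_zero (α := Fin 0) (by simpa using hk)
  | succ m ih =>
    intro j k hjk hk
    rcases j with _ | j
    · simpa using exists_isIntervalCover_zero (α := Fin (m + 1)) (by simpa using hk)
    obtain ⟨k, rfl⟩ : ∃ k', k = k' + 1 := ⟨k - 1, by omega⟩
    by_cases hsum : j + 1 + (k + 1) = m + 1
    · obtain ⟨F, hF, hcov⟩ := exists_isIntervalCover_zmod hjk hsum
      exact ⟨_, (card_map _).trans_le hF, hcov.map_equiv (ZMod.finEquiv (m + 1)).symm.toEquiv⟩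
    obtain ⟨F₁, hF₁, h₁⟩ := ih (j := j) (k := k) (by omega) (by omega)
    obtain ⟨F₂, hF₂, h₂⟩ := ih (j := j + 1) (k := k + 1) (by omega) (by omega)
    refine ⟨_, (card_map _).trans_le ?_, (h₁.option h₂).map_equiv (finSuccEquiv m).symm⟩
    calc _ ≤ #F₁ + #F₂ := (card_union_le _ _).trans (add_le_add card_image_le card_image_le)
      _ ≤ m.choose k + m.choose (k + 1) := add_le_add hF₁ hF₂
      _ = (m + 1).choose (k + 1) := (Nat.choose_succ_succ' m k).symm

theorem exists_isIntervalCover {n j k : ℕ} (hjk : j ≤ k) (hkn : k ≤ n) :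
    ∃ F : Finset (Finset (Fin n) × Finset (Fin n)),
      #F ≤ max (n.choose j) (n.choose k) ∧ IsIntervalCover j k F := by
  rcases le_total (j + k) n with h | h
  · obtain ⟨F, hF, hcov⟩ := exists_isIntervalCover_of_add_le n hjk h
    exact ⟨F, hF.trans (le_max_right _ _), hcov⟩
  · obtain ⟨F, hF, hcov⟩ :=
      exists_isIntervalCover_of_add_le n (j := n - k) (k := n - j) (by omega) (by omega)
    refine ⟨_, card_image_le.trans (hF.trans ?_),
      IsIntervalCover.image_compl (by simpa using hcov) (by simpa using hjk.trans hkn)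
        (by simpa using hkn)⟩
    rw [Nat.choose_symm (hjk.trans hkn)]
    exact le_max_left _ _

end VoigtWegener

/-- **(Voigt–Wegener).** The Boolean lattice `B(n)` has the strong interval covering
property: for all `0 ≤ j ≤ k ≤ n`, the family of subsets `S` of `[n]` with
`j ≤ |S| ≤ k` is the union of `max(C(n,j), C(n,k))` intervals `[X, Y]` with
`|X| = j`, `|Y| = k` and `X ⊆ Y`. -/
theorem stmt5 (n j k : ℕ) (hjk : j ≤ k) (hkn : k ≤ n) :
    ∃ F : Finset (Finset (Fin n) × Finset (Fin n)),
      F.card ≤ max (n.choose j) (n.choose k) ∧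
      (∀ p ∈ F, p.1.card = j ∧ p.2.card = k ∧ p.1 ⊆ p.2) ∧
      (⋃ p ∈ F, Set.Icc p.1 p.2) = {S : Finset (Fin n) | j ≤ S.card ∧ S.card ≤ k} := by
  obtain ⟨F, hF, hcov⟩ := VoigtWegener.exists_isIntervalCover hjk hkn
  exact ⟨F, hF, hcov.interval, hcov.biUnion_Icc_eq⟩
end

section
/- Let A, B be antichains of a finite partially ordered set P with |A| ≤ |B| and A ≱ B. Then the following are equivalent: (i) there exists a surjective function f : B → A such that for every lower set X of P satisfying A ∩ X ≠ ∅ and B ⊄ X, there is some b ∈ B \ X with f(b) ∈ X; (ii) in the distributive lattice of lower sets of P ordered by inclusion, there exists a function g : B → A such that the convex hull [𝒜, ℬ̄] = {X a lower set : ∃ a ∈ A, ∃ b ∈ B, ↓a ⊆ X ⊆ P \ ↑b} equals the union over b ∈ B of the intervals {X : ↓g(b) ⊆ X ⊆ P \ ↑b} (a union of |B| intervals with endpoints in 𝒜 = {↓a : a ∈ A} and ℬ̄ = {P \ ↑b : b ∈ B}). -/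
/-- **Proposition (duality).** Let `A, B` be antichains of a finite poset `P` with
`|A| ≤ |B|` and `A ≱ B`. Then the following are equivalent:
(i) there is a surjection `f : B → A` such that for every lower set `X` with
`A ∩ X ≠ ∅` and `B ⊄ X` there is `b ∈ B \ X` with `f b ∈ X`;
(ii) in the lattice of lower sets of `P`, the convex hull
`[𝒜, ℬ̄] = {X lower set | ∃ a ∈ A, ∃ b ∈ B, ↓a ⊆ X ⊆ (↑b)ᶜ}` is the union over
`b ∈ B` of the intervals `{X lower set | ↓g(b) ⊆ X ⊆ (↑b)ᶜ}` for some `g : B → A`. -/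
theorem stmt8 {P : Type*} [PartialOrder P] [Fintype P]
    (A B : Finset P)
    (hA : IsAntichain (· ≤ ·) (A : Set P))
    (hB : IsAntichain (· ≤ ·) (B : Set P))
    (hcard : A.card ≤ B.card)
    (hngeq₁ : ∀ a ∈ A, ∃ b ∈ B, ¬ b ≤ a)
    (hngeq₂ : ∀ b ∈ B, ∃ a ∈ A, ¬ b ≤ a) :
    (∃ f : P → P, (∀ b ∈ B, f b ∈ A) ∧ (∀ a ∈ A, ∃ b ∈ B, f b = a) ∧
        ∀ X : Set P, IsLowerSet X → ((A : Set P) ∩ X).Nonempty → ¬ ((B : Set P) ⊆ X) →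
          ∃ b ∈ B, b ∉ X ∧ f b ∈ X) ↔
      (∃ g : P → P, (∀ b ∈ B, g b ∈ A) ∧
        {X : Set P | IsLowerSet X ∧ ∃ a ∈ A, ∃ b ∈ B, Set.Iic a ⊆ X ∧ X ⊆ (Set.Ici b)ᶜ}
          = ⋃ b ∈ B, {X : Set P | IsLowerSet X ∧ Set.Iic (g b) ⊆ X ∧ X ⊆ (Set.Ici b)ᶜ}) := by
  constructor
  · rintro ⟨f, hf1, hf2, hf3⟩
    refine ⟨f, hf1, ?_⟩
    ext X
    simp only [Set.mem_setOf_eq, Set.mem_iUnion]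
    constructor
    · rintro ⟨hXl, a, ha, b₀, hb₀, haX, hXb₀⟩
      have hAX : ((A : Set P) ∩ X).Nonempty := ⟨a, ha, haX (le_refl a)⟩
      have hBX : ¬ ((B : Set P) ⊆ X) := fun h => hXb₀ (h hb₀) (le_refl b₀)
      obtain ⟨b, hb, hbX, hfbX⟩ := hf3 X hXl hAX hBX
      exact ⟨b, hb, hXl, fun x hx => hXl hx hfbX,
        fun x hx hbx => hbX (hXl hbx hx)⟩
    · rintro ⟨b, hb, hXl, h1, h2⟩
      exact ⟨hXl, f b, hf1 b hb, b, hb, h1, h2⟩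
  · rintro ⟨g, hg1, hg2⟩
    refine ⟨g, hg1, ?_, ?_⟩
    · intro a ha
      obtain ⟨b₀, hb₀, hb₀a⟩ := hngeq₁ a ha
      have hmem : Set.Iic a ∈
          {X : Set P | IsLowerSet X ∧ ∃ a ∈ A, ∃ b ∈ B, Set.Iic a ⊆ X ∧ X ⊆ (Set.Ici b)ᶜ} :=
        ⟨isLowerSet_Iic a, a, ha, b₀, hb₀, subset_rfl,
          fun x hx hbx => hb₀a (le_trans hbx hx)⟩
      rw [hg2] at hmem
      simp only [Set.mem_iUnion, Set.mem_setOf_eq] at hmem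
      obtain ⟨b, hb, _, hsub, _⟩ := hmem
      have hle : g b ≤ a := hsub (le_refl (g b))
      refine ⟨b, hb, ?_⟩
      by_contra hne
      exact hA (hg1 b hb) ha hne hle
    · intro X hXl hAX hBX
      obtain ⟨a, haA, haX⟩ := hAX
      obtain ⟨b₀, hb₀, hb₀X⟩ : ∃ b₀ ∈ B, b₀ ∉ X := by
        by_contra h
        push_neg at h
        exact hBX h
      have hmem : X ∈
          {X : Set P | IsLowerSet X ∧ ∃ a ∈ A, ∃ b ∈ B, Set.Iic a ⊆ X ∧ X ⊆ (Set.Ici b)ᶜ} :=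
        ⟨hXl, a, haA, b₀, hb₀, fun x hx => hXl hx haX,
          fun x hx hbx => hb₀X (hXl hbx hx)⟩
      rw [hg2] at hmem
      simp only [Set.mem_iUnion, Set.mem_setOf_eq] at hmem
      obtain ⟨b, hb, _, hsub, hsub2⟩ := hmem
      exact ⟨b, hb, fun hbX => hsub2 hbX (le_refl b), hsub (le_refl (g b))⟩
end

section
/- Let D be a finite distributive lattice graded by the rank function r (the height function), and let L = {x ∈ D : r(x) = i} and U = {x ∈ D : r(x) = j} be levels of D with i < j. Let a ∈ L and let b, c ∈ U with b ≠ c. Suppose there exist x, y ∈ D with a < x < b and a < y < c, such that x is incomparable to every element of (L ∪ U) \ {a, b} and y is incomparable to every element of (L ∪ U) \ {a, c}. Then L = {a}. -/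
/-!
Write `i = r a` and `j = r c`. Since `a` is the only element of rank `i` below `x` or `y`, and `c`
the only element of rank `j` above `y`, every element of rank at most `i` below `x` or `y` lies
below `a`, and for every `z` either `z ≤ c` or `c ≤ y ⊔ z`. Now let `d` have rank `i`. Its meets
with `x` and `y` have rank at most `i`, so lie below `a`; as `x ≰ c`, we get `c ≤ y ⊔ x` and by
distributivity `d ⊓ c ≤ (d ⊓ y) ⊔ (d ⊓ x) ≤ a`. If `c ≤ y ⊔ d`, distributivity again gives
`c ≤ y ⊔ (c ⊓ d) ≤ y`, contradicting `y < c`; hence `d ≤ c`, so `d ≤ a`, and `d = a` by rank.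
-/

section Graded

variable {P : Type*} [PartialOrder P] [LocallyFiniteOrder P] {r : P → ℕ}

theorem strictMono_of_covBy_imp_add_one (hr : ∀ x y : P, x ⋖ y → r y = r x + 1) :
    StrictMono r :=
  (strictMono_iff_forall_covBy r).2 fun x y hxy ↦ by rw [hr x y hxy]; exact Nat.lt_succ_self _

theorem exists_mem_Icc_rank_eq (hr : ∀ x y : P, x ⋖ y → r y = r x + 1) {u v : P} (huv : u ≤ v)
    {k : ℕ} (hk₁ : r u ≤ k) (hk₂ : k ≤ r v) : ∃ e ∈ Set.Icc u v, r e = k := by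
  obtain ⟨n, hn⟩ := Nat.exists_eq_add_of_le hk₁
  clear hk₁
  induction n generalizing u with
  | zero => exact ⟨u, ⟨le_rfl, huv⟩, hn.symm⟩
  | succ n ih =>
    have huv' : u < v := huv.lt_of_ne (by rintro rfl; omega)
    obtain ⟨w, huw, hwv⟩ := exists_covBy_le_of_lt huv'
    obtain ⟨e, ⟨hwe, hev⟩, hek⟩ := ih hwv (by rw [hr u w huw]; omega)
    exact ⟨e, ⟨huw.le.trans hwe, hev⟩, hek⟩

theorem le_of_le_of_rank_le (hr : ∀ x y : P, x ⋖ y → r y = r x + 1) {a y : P} {i : ℕ}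
    (hiy : i ≤ r y) (hy : ∀ e ≤ y, r e = i → e = a) {u : P} (huy : u ≤ y) (hu : r u ≤ i) :
    u ≤ a := by
  obtain ⟨e, ⟨hue, hey⟩, he⟩ := exists_mem_Icc_rank_eq hr huy hu hiy
  exact hy e hey he ▸ hue

theorem le_of_le_of_le_rank (hr : ∀ x y : P, x ⋖ y → r y = r x + 1) {c y : P} {j : ℕ}
    (hyj : r y ≤ j) (hy : ∀ e, y ≤ e → r e = j → e = c) {w : P} (hyw : y ≤ w) (hw : j ≤ r w) :
    c ≤ w := by
  obtain ⟨e, ⟨hye, hew⟩, he⟩ := exists_mem_Icc_rank_eq hr hyw hyj hw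
  exact hy e hye he ▸ hew

end Graded

theorem le_or_le_sup_of_unique_rank_ge {D : Type*} [Lattice D] [LocallyFiniteOrder D]
    {r : D → ℕ} (hr : ∀ x y : D, x ⋖ y → r y = r x + 1)
    {c y : D} (hyc : y ≤ c) (hy : ∀ e, y ≤ e → r e = r c → e = c) (z : D) :
    z ≤ c ∨ c ≤ y ⊔ z := by
  have mono := (strictMono_of_covBy_imp_add_one hr).monotone
  by_cases hcz : r c ≤ r (y ⊔ z)
  · exact Or.inr (le_of_le_of_le_rank hr (mono hyc) hy le_sup_left hcz)
  · obtain ⟨e, ⟨hyze, hecz⟩, he⟩ :=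
      exists_mem_Icc_rank_eq hr (sup_le_sup_right hyc z) (not_le.1 hcz).le (mono le_sup_left)
    exact Or.inl (hy e (le_sup_left.trans hyze) he ▸ le_sup_right.trans hyze)

theorem eq_of_rank_eq_of_unique_intervals {D : Type*} [DistribLattice D] [LocallyFiniteOrder D]
    {r : D → ℕ} (hr : ∀ x y : D, x ⋖ y → r y = r x + 1) {a c x y : D} (hax : a ≤ x) (hay : a ≤ y)
    (hyc : y < c) (hxc : ¬ x ≤ c) (hx : ∀ e ≤ x, r e = r a → e = a)
    (hy_down : ∀ e ≤ y, r e = r a → e = a) (hy_up : ∀ e, y ≤ e → r e = r c → e = c)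
    {d : D} (hd : r d = r a) : d = a := by
  have smono := strictMono_of_covBy_imp_add_one hr
  have hdx : d ⊓ x ≤ a :=
    le_of_le_of_rank_le hr (smono.monotone hax) hx inf_le_right (hd ▸ smono.monotone inf_le_left)
  have hdy : d ⊓ y ≤ a :=
    le_of_le_of_rank_le hr (smono.monotone hay) hy_down inf_le_right
      (hd ▸ smono.monotone inf_le_left)
  have hdc : d ⊓ c ≤ a :=
    calc d ⊓ c ≤ d ⊓ (y ⊔ x) :=
          inf_le_inf_left d ((le_or_le_sup_of_unique_rank_ge hr hyc.le hy_up x).resolve_left hxc)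
      _ = d ⊓ y ⊔ d ⊓ x := inf_sup_left d y x
      _ ≤ a := sup_le hdy hdx
  rcases le_or_le_sup_of_unique_rank_ge hr hyc.le hy_up d with hdc' | hcyd
  · exact eq_of_le_of_not_lt (inf_eq_left.2 hdc' ▸ hdc) fun hda ↦ (smono hda).ne hd
  · refine absurd ?_ hyc.not_ge
    calc c ≤ c ⊓ (y ⊔ d) := le_inf le_rfl hcyd
      _ = c ⊓ y ⊔ c ⊓ d := inf_sup_left c y d
      _ ≤ y := sup_le inf_le_right ((inf_comm c d ▸ hdc).trans hay)

theorem eq_or_eq_of_comparable {α : Type*} [LE α] {S : Set α} {a b x v : α}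
    (h : ∀ v ∈ S \ {a, b}, ¬ x ≤ v ∧ ¬ v ≤ x) (hv : v ∈ S) (hxv : x ≤ v ∨ v ≤ x) :
    v = a ∨ v = b := by
  by_contra! hne
  have := h v ⟨hv, by simpa using hne⟩
  tauto

theorem stmt9_general {D : Type*} [DistribLattice D] [Fintype D]
    (r : D → ℕ) (hrcov : ∀ x y : D, x ⋖ y → r y = r x + 1)
    (i j : ℕ) (hij : i < j)
    (L U : Set D) (hL : L = {x : D | r x = i}) (hU : U = {x : D | r x = j})
    (a : D) (ha : a ∈ L) (b c : D) (hb : b ∈ U) (hc : c ∈ U) (hbc : b ≠ c)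
    (x y : D) (hax : a < x) (hay : a < y) (hyc : y < c)
    (hx : ∀ v ∈ (L ∪ U) \ {a, b}, ¬ x ≤ v ∧ ¬ v ≤ x)
    (hy : ∀ w ∈ (L ∪ U) \ {a, c}, ¬ y ≤ w ∧ ¬ w ≤ y) :
    L = {a} := by
  classical
  let _ : LocallyFiniteOrder D := Fintype.toLocallyFiniteOrder
  subst hL hU
  rw [Set.mem_ofPred_eq] at ha hb hc
  have hx_down : ∀ e ≤ x, r e = r a → e = a := fun e hex he ↦
    (eq_or_eq_of_comparable hx (Or.inl (he.trans ha)) (Or.inr hex)).resolve_right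
      (by rintro rfl; omega)
  have hy_down : ∀ e ≤ y, r e = r a → e = a := fun e hey he ↦
    (eq_or_eq_of_comparable hy (Or.inl (he.trans ha)) (Or.inr hey)).resolve_right
      (by rintro rfl; omega)
  have hy_up : ∀ e, y ≤ e → r e = r c → e = c := fun e hye he ↦
    (eq_or_eq_of_comparable hy (Or.inr (he.trans hc)) (Or.inl hye)).resolve_left
      (by rintro rfl; omega)
  have hxc : ¬ x ≤ c := fun hxc ↦
    (eq_or_eq_of_comparable hx (Or.inr hc) (Or.inl hxc)).elim (by rintro rfl; omega) hbc.symm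
  ext d
  refine ⟨fun hd ↦ ?_, fun hd ↦ hd ▸ ha⟩
  exact eq_of_rank_eq_of_unique_intervals hrcov hax.le hay.le hyc hxc hx_down hy_down hy_up
    (hd.trans ha.symm)

/-- **Lemma (unique intervals).** Let `D` be a finite distributive lattice graded by
the rank function `r`, with levels `L` (rank `i`) and `U` (rank `j`), `i < j`.
Let `a ∈ L`, `b, c ∈ U` with `b ≠ c`, and suppose there are `x, y` with
`a < x < b`, `a < y < c`, `x` incomparable to every element of `(L ∪ U) \ {a, b}`,
and `y` incomparable to every element of `(L ∪ U) \ {a, c}`. Then `L = {a}`. -/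
theorem stmt9 {D : Type*} [DistribLattice D] [Fintype D] [BoundedOrder D]
    (r : D → ℕ) (hr0 : r ⊥ = 0) (hrcov : ∀ x y : D, x ⋖ y → r y = r x + 1)
    (i j : ℕ) (hij : i < j)
    (L U : Set D) (hL : L = {x : D | r x = i}) (hU : U = {x : D | r x = j})
    (a : D) (ha : a ∈ L) (b c : D) (hb : b ∈ U) (hc : c ∈ U) (hbc : b ≠ c)
    (x y : D) (hax : a < x) (hxb : x < b) (hay : a < y) (hyc : y < c)
    (hx : ∀ v ∈ (L ∪ U) \ {a, b}, ¬ x ≤ v ∧ ¬ v ≤ x)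
    (hy : ∀ w ∈ (L ∪ U) \ {a, c}, ¬ y ≤ w ∧ ¬ w ≤ y) :
    L = {a} :=
  stmt9_general r hrcov i j hij L U hL hU a ha b c hb hc hbc x y hax hay hyc hx hy
end

section
/- Let D be a finite distributive lattice graded by the rank function r (the height function), and suppose some level of D equals {a, b} with a ≠ b (i.e., {x ∈ D : r(x) = i} = {a, b} for some i). Then a ⊓ b is covered by a and a ⊓ b is covered by b, and every element of D that covers a ⊓ b is equal to a or to b. -/
/-!
Since `r` is strictly monotone, the two elements `a`, `b` of level `i` are incomparable, and
every element of rank at most `i` lies below one of them (push it up to level `i` along a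
saturated chain). Let `z ≤ a` and `w ≤ b` cover `m = a ⊓ b`. Then `z ⊓ w = m`, so by upper
modularity `z ⊔ w` has rank `r m + 2`; were this at most `i`, `z ⊔ w` would lie below `a` or `b`,
forcing `w ≤ m` or `z ≤ m`. Hence `r m + 1 = i`, and the covers of `m` are exactly the
elements of level `i`.
-/

section Rank

variable {α : Type*} [PartialOrder α] {r : α → ℕ}

theorem strictMono_of_covBy_eq_add_one [LocallyFiniteOrder α]
    (hr : ∀ x y : α, x ⋖ y → r y = r x + 1) : StrictMono r :=
  (strictMono_iff_forall_covBy r).mpr fun x y h => by rw [hr x y h]; exact Nat.lt_succ_self _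

theorem covBy_of_lt_of_eq_add_one (hmono : StrictMono r) {x y : α} (hxy : x < y)
    (h : r y = r x + 1) : x ⋖ y :=
  ⟨hxy, fun _ hxc hcy => by have := hmono hxc; have := hmono hcy; omega⟩

theorem not_le_of_rank_eq (hmono : StrictMono r) {a b : α} (hab : a ≠ b) (h : r a = r b) :
    ¬ a ≤ b :=
  fun hle => (hmono (hle.lt_of_ne hab)).ne h

end Rank

section LatticeRank

variable {α : Type*} [Lattice α] {r : α → ℕ}

theorem inf_lt_left_of_rank_eq (hmono : StrictMono r)
    {a b : α} (hab : a ≠ b) (h : r a = r b) : a ⊓ b < a :=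
  inf_le_left.lt_of_ne fun hinf => not_le_of_rank_eq hmono hab h (hinf ▸ inf_le_right)

theorem inf_lt_right_of_rank_eq (hmono : StrictMono r)
    {a b : α} (hab : a ≠ b) (h : r a = r b) : a ⊓ b < b :=
  inf_comm b a ▸ inf_lt_left_of_rank_eq hmono hab.symm h.symm

theorem exists_rank_eq_of_le [IsStronglyAtomic α] (hr : ∀ x y : α, x ⋖ y → r y = r x + 1)
    {y : α} (k : ℕ) : ∀ x, x ≤ y → r x + k ≤ r y → ∃ w, x ≤ w ∧ w ≤ y ∧ r w = r x + k := by
  induction k with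
  | zero => exact fun x hxy _ => ⟨x, le_rfl, hxy, rfl⟩
  | succ k ih =>
    intro x hxy hk
    have hlt : x < y := hxy.lt_of_ne (by rintro rfl; omega)
    obtain ⟨z, hxz, hzy⟩ := exists_covBy_le_of_lt hlt
    have hz := hr x z hxz
    obtain ⟨w, hzw, hwy, hw⟩ := ih z hzy (by omega)
    exact ⟨w, hxz.le.trans hzw, hwy, by omega⟩

theorem exists_le_rank_eq [IsStronglyAtomic α]
    (hr : ∀ x y : α, x ⋖ y → r y = r x + 1) (hmono : Monotone r) {x a : α} (h : r x ≤ r a) :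
    ∃ w, x ≤ w ∧ r w = r a := by
  have hsup : r a ≤ r (x ⊔ a) := hmono le_sup_right
  obtain ⟨w, hxw, -, hw⟩ :=
    exists_rank_eq_of_le hr (y := x ⊔ a) (r a - r x) x le_sup_left (by omega)
  exact ⟨w, hxw, by omega⟩

end LatticeRank

section Level

variable {D : Type*} {r : D → ℕ} {i : ℕ} {a b : D}

theorem rank_left_of_level (hlevel : {x : D | r x = i} = {a, b}) : r a = i :=
  (Set.ext_iff.mp hlevel a).mpr (Or.inl rfl)

theorem rank_right_of_level (hlevel : {x : D | r x = i} = {a, b}) : r b = i :=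
  (Set.ext_iff.mp hlevel b).mpr (Or.inr rfl)

variable [Lattice D] [IsStronglyAtomic D] (hr : ∀ x y : D, x ⋖ y → r y = r x + 1)
  (hmono : StrictMono r) (hlevel : {x : D | r x = i} = {a, b})
include hr hmono hlevel

theorem le_or_le_of_rank_le_level {x : D} (hx : r x ≤ i) : x ≤ a ∨ x ≤ b := by
  have ha := rank_left_of_level hlevel
  obtain ⟨w, hxw, hw⟩ := exists_le_rank_eq hr hmono.monotone (x := x) (a := a) (by omega)
  rcases (Set.ext_iff.mp hlevel w).mp (hw.trans ha) with rfl | rfl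
  · exact Or.inl hxw
  · exact Or.inr hxw

theorem rank_inf_add_one_eq_level [IsUpperModularLattice D] (hab : a ≠ b) :
    r (a ⊓ b) + 1 = i := by
  have ha := rank_left_of_level hlevel
  have hrab : r a = r b := ha.trans (rank_right_of_level hlevel).symm
  have hma := inf_lt_left_of_rank_eq hmono hab hrab
  obtain ⟨z, hmz, hza⟩ := exists_covBy_le_of_lt hma
  obtain ⟨w, hmw, hwb⟩ := exists_covBy_le_of_lt (inf_lt_right_of_rank_eq hmono hab hrab)
  have hzw : z ⊓ w = a ⊓ b := le_antisymm (inf_le_inf hza hwb) (le_inf hmz.le hmw.le)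
  have hwsup : w ⋖ z ⊔ w := covBy_sup_of_inf_covBy_left (hzw ▸ hmz)
  have hrsup : r (z ⊔ w) = r (a ⊓ b) + 2 := by rw [hr _ _ hwsup, hr _ _ hmw]
  have hmi : r (a ⊓ b) < i := ha ▸ hmono hma
  by_contra hne
  rcases le_or_le_of_rank_le_level hr hmono hlevel (x := z ⊔ w) (by omega) with h | h
  · exact hmw.lt.not_ge (le_inf (le_sup_right.trans h) hwb)
  · exact hmz.lt.not_ge (le_inf hza (le_sup_left.trans h))

end Level

theorem stmt10_general {D : Type*} [DistribLattice D] [Fintype D]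
    (r : D → ℕ) (hrcov : ∀ x y : D, x ⋖ y → r y = r x + 1)
    (i : ℕ) (a b : D) (hab : a ≠ b)
    (hlevel : {x : D | r x = i} = {a, b}) :
    (a ⊓ b) ⋖ a ∧ (a ⊓ b) ⋖ b ∧ ∀ z : D, (a ⊓ b) ⋖ z → z = a ∨ z = b := by
  classical
  let := Fintype.toLocallyFiniteOrder (α := D)
  have hmono := strictMono_of_covBy_eq_add_one hrcov
  have hm := rank_inf_add_one_eq_level hrcov hmono hlevel hab
  have ha := rank_left_of_level hlevel
  have hrab : r a = r b := ha.trans (rank_right_of_level hlevel).symm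
  refine ⟨covBy_of_lt_of_eq_add_one hmono (inf_lt_left_of_rank_eq hmono hab hrab) (by omega),
    covBy_of_lt_of_eq_add_one hmono (inf_lt_right_of_rank_eq hmono hab hrab) (by omega),
    fun z hz => (Set.ext_iff.mp hlevel z).mp ?_⟩
  have hrz := hrcov _ _ hz
  show r z = i
  omega

/-- If some level of a finite distributive lattice `D` (graded by the rank function
`r`) equals `{a, b}` with `a ≠ b`, then `a ⊓ b` is covered by both `a` and `b`,
and `a` and `b` are the only covers of `a ⊓ b` in `D`. -/
theorem stmt10 {D : Type*} [DistribLattice D] [Fintype D] [BoundedOrder D]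
    (r : D → ℕ) (hr0 : r ⊥ = 0) (hrcov : ∀ x y : D, x ⋖ y → r y = r x + 1)
    (i : ℕ) (a b : D) (hab : a ≠ b)
    (hlevel : {x : D | r x = i} = {a, b}) :
    (a ⊓ b) ⋖ a ∧ (a ⊓ b) ⋖ b ∧ ∀ z : D, (a ⊓ b) ⋖ z → z = a ∨ z = b :=
  stmt10_general r hrcov i a b hab hlevel
end

section
/- Let X and Y be disjoint nonempty subsets of a finite set [n], with |X| = r and |Y| = s. Let 𝒳 = {{x} : x ∈ X} and 𝒴 = {X ∪ {y} : y ∈ Y}, viewed in the Boolean lattice of subsets of [n] ordered by inclusion. Then 𝒳 ≤ 𝒴, for each x ∈ X and y ∈ Y the set {x, y} lies in the convex hull [𝒳, 𝒴] and the only interval [S, T] with S ∈ 𝒳, T ∈ 𝒴 containing {x, y} is [{x}, X ∪ {y}], and consequently every family of intervals [S, T] with S ∈ 𝒳, T ∈ 𝒴 whose union contains [𝒳, 𝒴] has at least r·s members. -/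
/-!
Every interval `[{x'}, X ∪ {y'}]` containing `{x, y}` has `x' ∈ {x, y}`, hence `x' = x` since
`y ∉ X`, and `y ∈ X ∪ {y'}`, hence `y = y'` since `y ∉ X`. So the `r⬝s` pairs `{x, y}` of the
convex hull each need their own interval `[{x}, X ∪ {y}]` in any cover.
-/

open Finset

section FranklExample

variable {α : Type*} [DecidableEq α] {X Y : Finset α} {x x' y y' : α}

theorem pair_subset_insert_of_mem (hx : x ∈ X) : ({x, y} : Finset α) ⊆ insert y X := by
  simp [insert_subset_iff, hx]

theorem eq_of_singleton_subset_pair (hdisj : Disjoint X Y) (hx' : x' ∈ X) (hy : y ∈ Y)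
    (h : ({x'} : Finset α) ⊆ {x, y}) : x' = x := by
  rw [singleton_subset_iff, mem_insert, mem_singleton] at h
  rcases h with h | rfl
  · exact h
  · exact absurd hy (disjoint_left.mp hdisj hx')

theorem eq_of_pair_subset_insert (hdisj : Disjoint X Y) (hy : y ∈ Y)
    (h : ({x, y} : Finset α) ⊆ insert y' X) : y = y' := by
  rcases mem_insert.mp (h (mem_insert_of_mem (mem_singleton_self y))) with h | h
  · exact h
  · exact absurd hy (disjoint_left.mp hdisj h)

theorem eq_of_pair_mem_Icc (hdisj : Disjoint X Y) (hy : y ∈ Y) {S T : Finset α}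
    (hS : S ∈ X.image fun x => ({x} : Finset α)) (hT : T ∈ Y.image fun y => insert y X)
    (hSZ : S ⊆ {x, y}) (hZT : {x, y} ⊆ T) : S = {x} ∧ T = insert y X := by
  obtain ⟨x', hx', rfl⟩ := mem_image.mp hS
  obtain ⟨y', -, rfl⟩ := mem_image.mp hT
  rw [eq_of_singleton_subset_pair hdisj hx' hy hSZ, eq_of_pair_subset_insert hdisj hy hZT]
  exact ⟨rfl, rfl⟩

theorem card_mul_card_le_card_of_forall_mem (hdisj : Disjoint X Y)
    {F : Finset (Finset α × Finset α)}
    (hF : ∀ x ∈ X, ∀ y ∈ Y, (({x} : Finset α), insert y X) ∈ F) :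
    #X * #Y ≤ #F := by
  rw [← card_product]
  refine card_le_card_of_injOn (fun q => (({q.1} : Finset α), insert q.2 X))
    (fun q hq => hF q.1 (mem_product.mp hq).1 q.2 (mem_product.mp hq).2) ?_
  rintro ⟨x, y⟩ hq ⟨x', y'⟩ - h
  simp only [Prod.mk.injEq] at h
  obtain ⟨hx, hy⟩ := h
  have hyX : y ∉ X := disjoint_right.mp hdisj (mem_product.mp hq).2
  rw [singleton_inj.mp hx, (insert_inj hyX).mp hy]

end FranklExample

/-- **Frankl's example.** Let `X, Y` be disjoint nonempty subsets of `[n]` with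
`|X| = r`, `|Y| = s`, and set `𝒳 = {{x} : x ∈ X}`, `𝒴 = {X ∪ {y} : y ∈ Y}` in the
Boolean lattice of subsets of `[n]`. Then `𝒳 ≤ 𝒴`; for each `x ∈ X`, `y ∈ Y` the
set `{x, y}` lies in the convex hull `[𝒳, 𝒴]` and the only interval `[S, T]` with
`S ∈ 𝒳`, `T ∈ 𝒴` containing it is `[{x}, X ∪ {y}]`; consequently every family of
intervals with endpoints in `𝒳 × 𝒴` covering `[𝒳, 𝒴]` has at least `r⬝s` members. -/
theorem stmt11 (n r s : ℕ) (X Y : Finset (Fin n))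
    (hdisj : Disjoint X Y) (hX : X.Nonempty) (hY : Y.Nonempty)
    (hXr : X.card = r) (hYs : Y.card = s)
    (𝒳 𝒴 : Finset (Finset (Fin n)))
    (h𝒳 : 𝒳 = X.image fun x => ({x} : Finset (Fin n)))
    (h𝒴 : 𝒴 = Y.image fun y => insert y X) :
    ((∀ S ∈ 𝒳, ∃ T ∈ 𝒴, S ⊆ T) ∧ (∀ T ∈ 𝒴, ∃ S ∈ 𝒳, S ⊆ T)) ∧
    (∀ x ∈ X, ∀ y ∈ Y,
      (∃ S ∈ 𝒳, ∃ T ∈ 𝒴, S ⊆ ({x, y} : Finset (Fin n)) ∧ ({x, y} : Finset (Fin n)) ⊆ T) ∧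
      (∀ S ∈ 𝒳, ∀ T ∈ 𝒴, S ⊆ ({x, y} : Finset (Fin n)) → ({x, y} : Finset (Fin n)) ⊆ T →
        S = {x} ∧ T = insert y X)) ∧
    (∀ F : Finset (Finset (Fin n) × Finset (Fin n)),
      (∀ p ∈ F, p.1 ∈ 𝒳 ∧ p.2 ∈ 𝒴) →
      ({Z : Finset (Fin n) | ∃ S ∈ 𝒳, ∃ T ∈ 𝒴, S ⊆ Z ∧ Z ⊆ T} ⊆
        ⋃ p ∈ F, Set.Icc p.1 p.2) →
      r * s ≤ F.card) := by
  subst h𝒳 h𝒴 hXr hYs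
  have hpair : ∀ x ∈ X, ∀ y ∈ Y, ∃ S ∈ X.image fun x => ({x} : Finset (Fin n)),
      ∃ T ∈ Y.image fun y => insert y X, S ⊆ {x, y} ∧ {x, y} ⊆ T :=
    fun x hx y hy => ⟨{x}, mem_image_of_mem _ hx, insert y X, mem_image_of_mem _ hy,
      by simp, pair_subset_insert_of_mem hx⟩
  refine ⟨⟨?_, ?_⟩, fun x hx y hy => ⟨hpair x hx y hy,
    fun S hS T hT => eq_of_pair_mem_Icc hdisj hy hS hT⟩, fun F hF hcov => ?_⟩
  · intro S hS
    obtain ⟨x, hx, rfl⟩ := mem_image.mp hS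
    obtain ⟨y, hy⟩ := hY
    exact ⟨insert y X, mem_image_of_mem _ hy, singleton_subset_iff.mpr (mem_insert_of_mem hx)⟩
  · intro T hT
    obtain ⟨y, -, rfl⟩ := mem_image.mp hT
    obtain ⟨x, hx⟩ := hX
    exact ⟨{x}, mem_image_of_mem _ hx, singleton_subset_iff.mpr (mem_insert_of_mem hx)⟩
  · refine card_mul_card_le_card_of_forall_mem hdisj fun x hx y hy => ?_
    obtain ⟨S, hSZ, T, hpF, hZT⟩ := by simpa using hcov (hpair x hx y hy)
    obtain ⟨rfl, rfl⟩ := eq_of_pair_mem_Icc hdisj hy (hF _ hpF).1 (hF _ hpF).2 hSZ hZT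
    exact hpF
end

section
/- For all integers m, n ≥ 2 there exist a finite distributive lattice D, graded by the rank function r (the height function), and an index i, such that the consecutive levels A = {x : r(x) = i} and B = {x : r(x) = i + 1} satisfy |A| = n, |B| = m and A ≤ B, and every family of intervals [a, b] with a ∈ A, b ∈ B whose union contains A ∪ B has at least m + n − 2 members. -/
/-!
Take the down-sets of the poset on `α ⊕ β` in which every element of `β` lies above all elements
of `α` except `a₀`, and nothing else is comparable. With `|α| = n` and `|β| = m - 1`, the level of
rank `n - 1` consists of the `n` sets `α \ {a}`, and the level of rank `n` of `α` itself and the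
`m - 1` sets `(α \ {a₀}) ∪ {b}`. For `a ≠ a₀` the only element of the upper level above `α \ {a}`
is `α`, and the only element of the lower level below `(α \ {a₀}) ∪ {b}` is `α \ {a₀}`. So a
covering family of intervals must contain the `n - 1` intervals `[α \ {a}, α]` and the `m - 1`
intervals `[α \ {a₀}, (α \ {a₀}) ∪ {b}]`.
-/

open Finset

theorem CovBy.apply_eq_add_one {γ : Type*} [PartialOrder γ] {f : γ → ℕ}
    (hf : ∀ x y, x < y → ∃ z, x < z ∧ z ≤ y ∧ f z = f x + 1) {x y : γ} (h : x ⋖ y) :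
    f y = f x + 1 := by
  obtain ⟨z, hxz, hzy, hz⟩ := hf x y h.lt
  rwa [hzy.eq_of_not_lt (h.2 hxz)] at hz

theorem card_add_card_le_of_forall_exists {γ : Type*} [Preorder γ] {F : Finset (γ × γ)}
    {A B : Finset γ} (hA : ∀ a ∈ A, ∃ p ∈ F, p.1 = a ∧ a ≤ p.2)
    (hB : ∀ b ∈ B, ∃ p ∈ F, p.1 ≤ b ∧ p.2 = b) (hAB : ∀ a ∈ A, ∀ b ∈ B, ¬a ≤ b) :
    #A + #B ≤ #F := by
  classical
  set FA := F.filter fun p => p.1 ∈ A ∧ p.1 ≤ p.2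
  set FB := F.filter fun p => p.2 ∈ B ∧ p.1 ≤ p.2
  have hFA : #A ≤ #FA := by
    refine (card_le_card (t := FA.image Prod.fst) fun a ha => ?_).trans card_image_le
    obtain ⟨p, hpF, rfl, hp⟩ := hA a ha
    exact mem_image_of_mem Prod.fst (mem_filter.2 ⟨hpF, ha, hp⟩)
  have hFB : #B ≤ #FB := by
    refine (card_le_card (t := FB.image Prod.snd) fun b hb => ?_).trans card_image_le
    obtain ⟨p, hpF, hp, rfl⟩ := hB b hb
    exact mem_image_of_mem Prod.snd (mem_filter.2 ⟨hpF, hb, hp⟩)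
  have hdisj : Disjoint FA FB :=
    disjoint_filter.2 fun p _ hpA hpB => hAB _ hpA.1 _ hpB.1 hpA.2
  calc #A + #B ≤ #FA + #FB := add_le_add hFA hFB
    _ = #(FA ∪ FB) := (card_union_of_disjoint hdisj).symm
    _ ≤ #F := card_le_card (union_subset (filter_subset _ _) (filter_subset _ _))

theorem card_add_card_le_of_cover {γ : Type*} [PartialOrder γ] {r : γ → ℕ} (hr : StrictMono r)
    {i : ℕ} {F : Finset (γ × γ)} (hF : ∀ p ∈ F, r p.1 = i ∧ r p.2 = i + 1)
    (hcov : {x | r x = i} ∪ {x | r x = i + 1} ⊆ ⋃ p ∈ F, Set.Icc p.1 p.2)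
    {A B : Finset γ} (hA : ∀ a ∈ A, r a = i) (hB : ∀ b ∈ B, r b = i + 1)
    (hAB : ∀ a ∈ A, ∀ b ∈ B, ¬a ≤ b) :
    #A + #B ≤ #F := by
  have eq_of_le {x y : γ} (h : x ≤ y) (hxy : r x = r y) : x = y :=
    h.lt_or_eq.resolve_left fun hlt => (hr hlt).ne hxy
  refine card_add_card_le_of_forall_exists (fun a ha => ?_) (fun b hb => ?_) hAB
  · obtain ⟨p, hpF, hp⟩ := Set.mem_iUnion₂.1 (hcov (Or.inl (hA a ha)))
    exact ⟨p, hpF, eq_of_le hp.1 ((hF p hpF).1.trans (hA a ha).symm), hp.2⟩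
  · obtain ⟨p, hpF, hp⟩ := Set.mem_iUnion₂.1 (hcov (Or.inr (hB b hb)))
    exact ⟨p, hpF, hp.1, (eq_of_le hp.2 ((hB b hb).trans (hF p hpF).2.symm)).symm⟩

variable {α β : Type*} [DecidableEq α] [DecidableEq β]

/-- The down-sets `S ∪ T` of the poset on `α ⊕ β` in which every element of `β` lies above exactly
the elements of `C`, encoded as pairs `(S, T)`. -/
def coreSublattice (β : Type*) [DecidableEq β] (C : Finset α) :
    Sublattice (Finset α × Finset β) where
  carrier := {p | p.2.Nonempty → C ⊆ p.1}
  supClosed' p hp q hq h := by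
    obtain ⟨b, hb⟩ := h
    rcases mem_union.1 hb with hb | hb
    · exact (hp ⟨b, hb⟩).trans subset_union_left
    · exact (hq ⟨b, hb⟩).trans subset_union_right
  infClosed' p hp q hq h :=
    subset_inter (hp (h.mono inter_subset_left)) (hq (h.mono inter_subset_right))

namespace coreSublattice

variable {C : Finset α}

def rank (x : coreSublattice β C) : ℕ := #x.1.1 + #x.1.2

theorem rank_strictMono : StrictMono (rank : coreSublattice β C → ℕ) := by
  intro x y h
  rcases Prod.lt_iff.1 (show x.1 < y.1 from h) with ⟨h1, h2⟩ | ⟨h1, h2⟩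
  · have := card_lt_card h1; have := card_le_card h2; unfold rank; omega
  · have := card_le_card h1; have := card_lt_card h2; unfold rank; omega

theorem exists_rank_eq_add_one {x y : coreSublattice β C} (h : x < y) :
    ∃ z, x < z ∧ z ≤ y ∧ rank z = rank x + 1 := by
  obtain ⟨⟨h1, h2⟩, hne⟩ := lt_iff_le_and_ne.1 h
  by_cases hfst : x.1.1 = y.1.1
  · have h2' : x.1.2 ⊂ y.1.2 :=
      h2.ssubset_of_ne fun h2 => hne (Subtype.ext (Prod.ext hfst h2))
    obtain ⟨b, hby, hbx⟩ := exists_of_ssubset h2'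
    refine ⟨⟨(x.1.1, insert b x.1.2), fun _ => hfst ▸ y.2 ⟨b, hby⟩⟩, ?_,
      ⟨hfst.le, insert_subset hby h2⟩, ?_⟩
    · exact Prod.lt_iff.2 (Or.inr ⟨le_rfl, ssubset_insert hbx⟩)
    · simp [rank, card_insert_of_notMem hbx, add_assoc]
  · obtain ⟨a, hay, hax⟩ := exists_of_ssubset (h1.ssubset_of_ne hfst)
    refine ⟨⟨(insert a x.1.1, x.1.2), fun hT => (x.2 hT).trans (subset_insert a _)⟩, ?_,
      ⟨insert_subset hay h1, h2⟩, ?_⟩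
    · exact Prod.lt_iff.2 (Or.inl ⟨ssubset_insert hax, le_rfl⟩)
    · simp [rank, card_insert_of_notMem hax, add_right_comm]

theorem rank_covBy {x y : coreSublattice β C} (h : x ⋖ y) : rank y = rank x + 1 :=
  h.apply_eq_add_one fun _ _ => exists_rank_eq_add_one

def ofLeft (S : Finset α) : coreSublattice β C := ⟨(S, ∅), fun h => absurd h not_nonempty_empty⟩

def ofCore (b : β) : coreSublattice β C := ⟨(C, {b}), fun _ => subset_rfl⟩

theorem rank_ofLeft (S : Finset α) : rank (ofLeft S : coreSublattice β C) = #S := by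
  simp [rank, ofLeft]

theorem rank_ofCore (b : β) : rank (ofCore b : coreSublattice β C) = #C + 1 := rfl

theorem ofLeft_injective : Function.Injective (ofLeft : Finset α → coreSublattice β C) :=
  fun _ _ h => congrArg (fun x : coreSublattice β C => x.1.1) h

theorem ofCore_injective : Function.Injective (ofCore : β → coreSublattice β C) :=
  fun _ _ h => singleton_injective (congrArg (fun x : coreSublattice β C => x.1.2) h)

theorem ofLeft_ne_ofCore (S : Finset α) (b : β) : (ofLeft S : coreSublattice β C) ≠ ofCore b :=
  fun h => singleton_ne_empty b (congrArg (fun x : coreSublattice β C => x.1.2) h).symm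

theorem ofLeft_le_ofLeft {S T : Finset α} (h : S ⊆ T) :
    (ofLeft S : coreSublattice β C) ≤ ofLeft T :=
  ⟨h, subset_rfl⟩

theorem ofLeft_le_ofCore_iff {S : Finset α} {b : β} :
    (ofLeft S : coreSublattice β C) ≤ ofCore b ↔ S ⊆ C :=
  ⟨fun h => h.1, fun h => ⟨h, empty_subset _⟩⟩

theorem card_add_one_le_rank {x : coreSublattice β C} (h : x.1.2.Nonempty) : #C + 1 ≤ rank x :=
  add_le_add (card_le_card (x.2 h)) h.card_pos

instance [Fintype α] [Fintype β] : BoundedOrder (coreSublattice β C) :=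
  Subtype.boundedOrder (fun h => absurd h not_nonempty_empty) fun _ => subset_univ C

variable [Fintype α]

theorem ofLeft_erase_injective :
    Function.Injective fun a : α => (ofLeft (univ.erase a) : coreSublattice β C) :=
  fun a _ h => (erase_inj univ (mem_univ a)).1 (ofLeft_injective h)

theorem ofLeft_erase_le_ofCore_iff {a a₀ : α} {b : β} :
    (ofLeft (univ.erase a) : coreSublattice β (univ.erase a₀)) ≤ ofCore b ↔ a = a₀ := by
  rw [ofLeft_le_ofCore_iff, ← compl_singleton, ← compl_singleton, compl_subset_compl,
    singleton_subset_singleton, eq_comm]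

variable {a₀ : α} {i : ℕ}

theorem setOf_rank_eq_of_add_one_eq (hi : i + 1 = Fintype.card α) :
    {x : coreSublattice β (univ.erase a₀) | rank x = i} =
      Set.range fun a => ofLeft (univ.erase a) := by
  have hC : #(univ.erase a₀) + 1 = Fintype.card α := card_erase_add_one (mem_univ a₀)
  ext ⟨⟨S, T⟩, hx⟩
  simp only [Set.mem_ofPred_eq, Set.mem_range]
  constructor
  · intro hr
    obtain rfl : T = ∅ := by
      by_contra hT
      have := card_add_one_le_rank (x := ⟨(S, T), hx⟩) (nonempty_iff_ne_empty.2 hT)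
      omega
    have hS : #Sᶜ = 1 := by
      rw [card_compl]
      simp only [rank, card_empty, add_zero] at hr
      omega
    obtain ⟨a, ha⟩ := card_eq_one.1 hS
    exact ⟨a, Subtype.ext (Prod.ext (show univ.erase a = S by
      rw [← compl_singleton, ← ha, compl_compl]) rfl)⟩
  · rintro ⟨a, h⟩
    rw [← h, rank_ofLeft, card_erase_of_mem (mem_univ a), card_univ]
    omega

theorem setOf_rank_eq_add_one_of_add_one_eq (hi : i + 1 = Fintype.card α) :
    {x : coreSublattice β (univ.erase a₀) | rank x = i + 1} =
      insert (ofLeft univ) (Set.range ofCore) := by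
  have hC : #(univ.erase a₀) + 1 = Fintype.card α := card_erase_add_one (mem_univ a₀)
  ext ⟨⟨S, T⟩, hx⟩
  simp only [Set.mem_ofPred_eq, Set.mem_insert_iff, Set.mem_range]
  constructor
  · intro hr
    rcases T.eq_empty_or_nonempty with rfl | hT
    · left
      simp only [rank, card_empty, add_zero] at hr
      exact Subtype.ext (Prod.ext (eq_univ_of_card S (hr.trans hi)) rfl)
    · right
      have hSC : univ.erase a₀ ⊆ S := hx hT
      have hS := card_le_card hSC
      have hT0 := hT.card_pos
      simp only [rank] at hr
      obtain ⟨b, rfl⟩ := card_eq_one.1 (show #T = 1 by omega)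
      exact ⟨b, Subtype.ext (Prod.ext (show univ.erase a₀ = S from
        eq_of_subset_of_card_le hSC (by omega)) rfl)⟩
  · rintro (h | ⟨b, h⟩)
    · rw [h, rank_ofLeft, card_univ, hi]
    · rw [← h, rank_ofCore, hC, hi]

theorem ncard_setOf_rank_eq (hi : i + 1 = Fintype.card α) :
    {x : coreSublattice β (univ.erase a₀) | rank x = i}.ncard = Fintype.card α := by
  rw [setOf_rank_eq_of_add_one_eq hi, Set.ncard_range_of_injective ofLeft_erase_injective,
    Nat.card_eq_fintype_card]

theorem ncard_setOf_rank_eq_add_one [Fintype β] (hi : i + 1 = Fintype.card α) :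
    {x : coreSublattice β (univ.erase a₀) | rank x = i + 1}.ncard = Fintype.card β + 1 := by
  rw [setOf_rank_eq_add_one_of_add_one_eq hi, Set.ncard_insert_of_notMem, add_left_inj,
    Set.ncard_range_of_injective ofCore_injective, Nat.card_eq_fintype_card]
  rintro ⟨b, hb⟩
  exact ofLeft_ne_ofCore _ _ hb.symm

theorem add_card_le_card_of_cover [Fintype β] (hi : i + 1 = Fintype.card α)
    {F : Finset (coreSublattice β (univ.erase a₀) × coreSublattice β (univ.erase a₀))}
    (hF : ∀ p ∈ F, rank p.1 = i ∧ rank p.2 = i + 1)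
    (hcov : {x | rank x = i} ∪ {x | rank x = i + 1} ⊆ ⋃ p ∈ F, Set.Icc p.1 p.2) :
    i + Fintype.card β ≤ #F := by
  have hA := (setOf_rank_eq_of_add_one_eq (β := β) (a₀ := a₀) hi).ge
  have hB := (setOf_rank_eq_add_one_of_add_one_eq (β := β) (a₀ := a₀) hi).ge
  have key := card_add_card_le_of_cover rank_strictMono hF hcov
    (A := (univ.erase a₀).image fun a => ofLeft (univ.erase a)) (B := univ.image ofCore)
    (by simp only [mem_image]; rintro _ ⟨a, -, rfl⟩; exact hA ⟨a, rfl⟩)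
    (by simp only [mem_image]; rintro _ ⟨b, -, rfl⟩; exact hB (Set.mem_insert_of_mem _ ⟨b, rfl⟩))
    (by simp only [mem_image]; rintro _ ⟨a, ha, rfl⟩ _ ⟨b, -, rfl⟩
        exact fun h => (mem_erase.1 ha).1 (ofLeft_erase_le_ofCore_iff.1 h))
  rwa [card_image_of_injective _ ofLeft_erase_injective, card_image_of_injective _ ofCore_injective,
    card_erase_of_mem (mem_univ _), card_univ, card_univ, ← hi, Nat.add_sub_cancel] at key

end coreSublattice

open coreSublattice in
/-- For all `m, n ≥ 2` there is a finite distributive lattice `D`, graded by a rank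
function `r`, with consecutive levels `A` (rank `i`, size `n`) and `B` (rank `i+1`,
size `m`) satisfying `A ≤ B`, such that every family of intervals `[a, b]` with
`a ∈ A`, `b ∈ B` covering `A ∪ B` has at least `m + n - 2` members. -/
theorem stmt13 (m n : ℕ) (hm : 2 ≤ m) (hn : 2 ≤ n) :
    ∃ (D : Type) (_ : DistribLattice D) (_ : Fintype D) (_ : BoundedOrder D)
      (r : D → ℕ) (i : ℕ),
      r ⊥ = 0 ∧ (∀ x y : D, x ⋖ y → r y = r x + 1) ∧
      {x : D | r x = i}.ncard = n ∧ {x : D | r x = i + 1}.ncard = m ∧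
      (∀ a ∈ {x : D | r x = i}, ∃ b ∈ {x : D | r x = i + 1}, a ≤ b) ∧
      (∀ b ∈ {x : D | r x = i + 1}, ∃ a ∈ {x : D | r x = i}, a ≤ b) ∧
      ∀ F : Finset (D × D),
        (∀ p ∈ F, r p.1 = i ∧ r p.2 = i + 1) →
        ({x : D | r x = i} ∪ {x : D | r x = i + 1} ⊆ ⋃ p ∈ F, Set.Icc p.1 p.2) →
        m + n - 2 ≤ F.card := by
  let a₀ : Fin n := ⟨0, by omega⟩
  have hi : n - 1 + 1 = Fintype.card (Fin n) := by rw [Fintype.card_fin]; omega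
  refine ⟨coreSublattice (Fin (m - 1)) (univ.erase a₀), inferInstance, Fintype.ofFinite _,
    inferInstance, rank, n - 1, rfl, fun _ _ => rank_covBy, ?_, ?_, ?_, ?_, fun F hF hcov => ?_⟩
  · rw [ncard_setOf_rank_eq hi, Fintype.card_fin]
  · rw [ncard_setOf_rank_eq_add_one hi, Fintype.card_fin]
    omega
  · rw [setOf_rank_eq_of_add_one_eq hi, setOf_rank_eq_add_one_of_add_one_eq hi]
    rintro _ ⟨a, rfl⟩
    exact ⟨ofLeft univ, Set.mem_insert _ _, ofLeft_le_ofLeft (subset_univ _)⟩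
  · rw [setOf_rank_eq_of_add_one_eq hi, setOf_rank_eq_add_one_of_add_one_eq hi]
    rintro _ (rfl | ⟨b, rfl⟩)
    · exact ⟨_, ⟨a₀, rfl⟩, ofLeft_le_ofLeft (subset_univ _)⟩
    · exact ⟨_, ⟨a₀, rfl⟩, ofLeft_erase_le_ofCore_iff.2 rfl⟩
  · have := add_card_le_card_of_cover hi hF hcov
    rw [Fintype.card_fin] at this
    omega
end

section
/- (Bouchemakh–Engel) Every finite product of finite chains has the strong interval covering property: let ι be a finite index set, let c : ι → ℕ, and let P = Π_{i ∈ ι} {0, 1, …, c(i)} with the componentwise order, so that the rank of x ∈ P is r(x) = Σ_i x(i) and the j-th level is L_j = {x : r(x) = j}. Then for all 0 ≤ j ≤ k ≤ Σ_i c(i), the set {x ∈ P : j ≤ r(x) ≤ k} is the union of max(|L_j|, |L_k|) closed intervals [a, b] with a ∈ L_j and b ∈ L_k. -/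
/-!
A finite product of chains has a nested symmetric chain decomposition (de Bruijn): given one of
`α`, the grid `{0, …, m} × p` over each of its chains `p` splits into hooks, and these hooks form
one of `Fin (m + 1) × α`.

Given such a decomposition and `j + k ≤ N`, each chain through level `k` yields one interval: from
a rank-`j` element below the chain's element of rank `max j lo` up to its element of rank `k`.
An `x` of rank in `[j, k]` whose own chain stops below level `k` lies inside the hull of its
ancestor chain starting at rank `N - k`, so these at most `|L_k|` intervals cover the band. For
`j + k > N`, apply this to the order dual ranked by `N - ρ`.
-/

open Finset OrderDual

structure SymmChain (α : Type*) where
  lo : ℕ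
  elt : ℕ → α

/-- `p.elt m` is the element of rank `m` of the chain `p`, for `m ∈ [p.lo, N - p.lo]`; other values
of `p.elt` are junk. Nestedness: each chain with `0 < lo` lies in the hull of a chain one step
longer at each end. -/
structure NestedSCD (α : Type*) [Preorder α] (ρ : α → ℕ) (N : ℕ) where
  chains : Finset (SymmChain α)
  two_mul_lo_le : ∀ p ∈ chains, 2 * p.lo ≤ N
  rank_elt : ∀ p ∈ chains, ∀ m ∈ Set.Icc p.lo (N - p.lo), ρ (p.elt m) = m
  monotoneOn_elt : ∀ p ∈ chains, MonotoneOn p.elt (Set.Icc p.lo (N - p.lo))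
  exists_mem : ∀ x, ∃ p ∈ chains, ρ x ∈ Set.Icc p.lo (N - p.lo) ∧ p.elt (ρ x) = x
  eq_of_elt_eq : ∀ p ∈ chains, ∀ q ∈ chains, ∀ m ∈ Set.Icc p.lo (N - p.lo),
    m ∈ Set.Icc q.lo (N - q.lo) → p.elt m = q.elt m → p = q
  exists_parent : ∀ p ∈ chains, 0 < p.lo → ∃ q ∈ chains, q.lo + 1 = p.lo ∧
    q.elt q.lo ≤ p.elt p.lo ∧ p.elt (N - p.lo) ≤ q.elt (N - q.lo)

def OrderIso.piCongrLeft {ι ι' : Type*} (P : ι' → Type*) [∀ i, LE (P i)] (e : ι ≃ ι') :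
    (∀ i, P (e i)) ≃o ∀ i, P i where
  toEquiv := Equiv.piCongrLeft P e
  map_rel_iff' {_ _} := by
    simp only [Pi.le_def, ← e.forall_congr_right, Equiv.piCongrLeft_apply_apply]

theorem Fin.clamp_le_clamp {a b : ℕ} (h : a ≤ b) (m : ℕ) : Fin.clamp a m ≤ Fin.clamp b m := by
  simp only [Fin.le_def, Fin.coe_clamp]
  omega

namespace SymmChain

variable {α : Type*}

/-- The `t`-th hook of the grid `{0, …, m} × p`: up column `t` to row `N - p.lo - t`, then along
that row to column `m`; `s` is the column of its element of rank `M`. -/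
@[simps]
def hook (N m : ℕ) (p : SymmChain α) (t : ℕ) : SymmChain (Fin (m + 1) × α) where
  lo := p.lo + t
  elt M :=
    let s := max t (M + t + p.lo - N)
    (Fin.clamp s m, p.elt (M - s))

theorem hook_elt_eq {N m : ℕ} {p : SymmChain α} {t M s : ℕ}
    (hs : max t (M + t + p.lo - N) = s) :
    (p.hook N m t).elt M = (Fin.clamp s m, p.elt (M - s)) := by
  subst hs
  rfl

end SymmChain

namespace NestedSCD

open SymmChain

variable {α : Type*} [Preorder α] {ρ : α → ℕ} {N : ℕ}

theorem rank_le (S : NestedSCD α ρ N) (x : α) : ρ x ≤ N := by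
  obtain ⟨p, -, hx, -⟩ := S.exists_mem x
  exact hx.2.trans (Nat.sub_le _ _)

theorem exists_ancestor (S : NestedSCD α ρ N) {p : SymmChain α} (hp : p ∈ S.chains) {t : ℕ}
    (ht : t ≤ p.lo) :
    ∃ q ∈ S.chains, q.lo = t ∧ q.elt t ≤ p.elt p.lo ∧ p.elt (N - p.lo) ≤ q.elt (N - t) := by
  obtain ⟨d, hd⟩ := Nat.exists_eq_add_of_le ht
  induction d generalizing p with
  | zero => exact ⟨p, hp, hd, by rw [hd]; rfl, by rw [hd]; rfl⟩
  | succ d ih =>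
    obtain ⟨q, hq, hqp, hbot, htop⟩ := S.exists_parent p hp (by omega)
    obtain ⟨r, hr, hrt, hrbot, hrtop⟩ := ih hq (by omega) (by omega)
    exact ⟨r, hr, hrt, hrbot.trans hbot, htop.trans hrtop⟩

theorem exists_le_rank_eq (S : NestedSCD α ρ N) {x : α} {j : ℕ} (hj : j ≤ ρ x) :
    ∃ a ≤ x, ρ a = j := by
  obtain ⟨p, hp, hx, hpx⟩ := S.exists_mem x
  have ⟨hx₁, hx₂⟩ := hx
  have hlo := S.two_mul_lo_le p hp
  rcases le_total p.lo j with hpj | hjp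
  · refine ⟨p.elt j, ?_, S.rank_elt p hp j ⟨hpj, by omega⟩⟩
    rw [← hpx]
    exact S.monotoneOn_elt p hp ⟨hpj, by omega⟩ hx hj
  · obtain ⟨q, hq, rfl, hbot, -⟩ := S.exists_ancestor hp hjp
    refine ⟨q.elt q.lo, hbot.trans ?_, S.rank_elt q hq _ ⟨le_rfl, by omega⟩⟩
    rw [← hpx]
    exact S.monotoneOn_elt p hp ⟨le_rfl, by omega⟩ hx hx.1

theorem exists_chain_between (S : NestedSCD α ρ N) {j k : ℕ} (hjk : j + k ≤ N) {x : α}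
    (hjx : j ≤ ρ x) (hxk : ρ x ≤ k) : ∃ p ∈ S.chains, k ∈ Set.Icc p.lo (N - p.lo) ∧
      p.elt (max j p.lo) ≤ x ∧ x ≤ p.elt k := by
  obtain ⟨p, hp, hx, hpx⟩ := S.exists_mem x
  have ⟨hx₁, hx₂⟩ := hx
  have hmono := S.monotoneOn_elt p hp
  rcases le_total p.lo (N - k) with hpk | hkp
  · refine ⟨p, hp, ⟨by omega, by omega⟩, ?_, ?_⟩ <;> rw [← hpx]
    · exact hmono ⟨le_max_right _ _, by omega⟩ hx (max_le hjx hx.1)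
    · exact hmono hx ⟨by omega, by omega⟩ hxk
  · -- `p` stops below level `k`; its ancestor starting at rank `N - k` does not
    obtain ⟨q, hq, hqk, hbot, htop⟩ := S.exists_ancestor hp hkp
    have hlo := S.two_mul_lo_le p hp
    refine ⟨q, hq, ⟨by omega, by omega⟩, ?_, ?_⟩
    · rw [max_eq_right (by omega), hqk, ← hpx]
      exact hbot.trans (hmono ⟨le_rfl, by omega⟩ hx hx.1)
    · rw [show k = N - (N - k) by omega, ← hpx]
      exact (hmono hx ⟨by omega, le_rfl⟩ hx.2).trans htop

theorem card_chains_through_le [Finite α] (S : NestedSCD α ρ N) (k : ℕ) :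
    {p ∈ S.chains | k ∈ Set.Icc p.lo (N - p.lo)}.card ≤ {x | ρ x = k}.ncard := by
  rw [← Set.ncard_coe_finset]
  refine Set.ncard_le_ncard_of_injOn (fun p => p.elt k) ?_ ?_ (Set.toFinite _)
  · intro p hp
    simp only [coe_filter] at hp
    exact S.rank_elt p hp.1 k hp.2
  · intro p hp q hq hpq
    simp only [coe_filter] at hp hq
    exact S.eq_of_elt_eq p hp.1 q hq.1 k hp.2 hq.2 hpq

theorem exists_intervals_of_add_le [Finite α] (S : NestedSCD α ρ N) (hρ : Monotone ρ)
    {j k : ℕ} (hjkN : j + k ≤ N) :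
    ∃ F : Finset (α × α), F.card ≤ {x | ρ x = k}.ncard ∧
      (∀ p ∈ F, ρ p.1 = j ∧ ρ p.2 = k) ∧
      ⋃ p ∈ F, Set.Icc p.1 p.2 = {x | j ≤ ρ x ∧ ρ x ≤ k} := by
  classical
  set O := {p ∈ S.chains | k ∈ Set.Icc p.lo (N - p.lo)}
  have hrank : ∀ p ∈ O, ρ (p.elt (max j p.lo)) = max j p.lo ∧ ρ (p.elt k) = k := by
    intro p hp
    obtain ⟨hp, hk₁, hk₂⟩ := mem_filter.1 hp
    exact ⟨S.rank_elt p hp _ ⟨le_max_right _ _, by omega⟩,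
      S.rank_elt p hp k ⟨hk₁, hk₂⟩⟩
  have hbot : ∀ p ∈ O, ∃ a ≤ p.elt (max j p.lo), ρ a = j := fun p hp =>
    S.exists_le_rank_eq ((le_max_left _ _).trans_eq (hrank p hp).1.symm)
  choose a hap haj using hbot
  refine ⟨O.attach.image fun p => (a p.1 p.2, p.1.elt k), ?_, ?_, ?_⟩
  · exact card_image_le.trans (card_attach.trans_le (S.card_chains_through_le k))
  · simp only [mem_image, mem_attach, true_and]
    rintro _ ⟨⟨p, hp⟩, rfl⟩
    exact ⟨haj p hp, (hrank p hp).2⟩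
  · ext x
    simp only [Set.mem_iUnion, Set.mem_Icc, mem_image, mem_attach, true_and, exists_prop]
    constructor
    · rintro ⟨_, ⟨⟨p, hp⟩, rfl⟩, hax, hxb⟩
      exact ⟨haj p hp ▸ hρ hax, (hrank p hp).2 ▸ hρ hxb⟩
    · rintro ⟨hjx, hxk⟩
      obtain ⟨p, hp, hk, hpx, hxp⟩ := S.exists_chain_between hjkN hjx hxk
      have hpO : p ∈ O := mem_filter.2 ⟨hp, hk⟩
      exact ⟨_, ⟨⟨p, hpO⟩, rfl⟩, (hap p hpO).trans hpx, hxp⟩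

open scoped Classical in
noncomputable def dual (S : NestedSCD α ρ N) :
    NestedSCD αᵒᵈ (fun x => N - ρ (ofDual x)) N where
  chains := S.chains.image fun p => ⟨p.lo, fun m => toDual (p.elt (N - m))⟩
  two_mul_lo_le := by
    simp only [forall_mem_image]
    exact S.two_mul_lo_le
  rank_elt := by
    simp only [forall_mem_image]
    rintro p hp m ⟨hm₁, hm₂⟩
    rw [ofDual_toDual, S.rank_elt p hp (N - m) ⟨by omega, by omega⟩]
    omega
  monotoneOn_elt := by
    simp only [forall_mem_image]
    rintro p hp m ⟨hm₁, hm₂⟩ m' ⟨hm₁', hm₂'⟩ hmm'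
    exact toDual_le_toDual.2
      (S.monotoneOn_elt p hp ⟨by omega, by omega⟩ ⟨by omega, by omega⟩ (by omega))
  exists_mem := by
    intro x
    obtain ⟨p, hp, ⟨hx₁, hx₂⟩, hpx⟩ := S.exists_mem (ofDual x)
    refine ⟨_, mem_image_of_mem _ hp, ?_⟩
    dsimp only
    refine ⟨⟨by omega, by omega⟩, ?_⟩
    simp only [Nat.sub_sub_self (S.rank_le _), hpx, toDual_ofDual]
  eq_of_elt_eq := by
    simp only [forall_mem_image]
    rintro p hp q hq m ⟨hp₁, hp₂⟩ ⟨hq₁, hq₂⟩ hpq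
    rw [S.eq_of_elt_eq p hp q hq (N - m) ⟨by omega, by omega⟩ ⟨by omega, by omega⟩
      (toDual.injective hpq)]
  exists_parent := by
    simp only [forall_mem_image, exists_mem_image]
    intro p hp hlo
    obtain ⟨q, hq, hqp, hbot, htop⟩ := S.exists_parent p hp hlo
    have hp₂ := S.two_mul_lo_le p hp
    have hq₂ := S.two_mul_lo_le q hq
    refine ⟨q, hq, hqp, ?_, ?_⟩
    · simpa only [toDual_le_toDual] using htop
    · simpa only [toDual_le_toDual, Nat.sub_sub_self (by omega : p.lo ≤ N),
        Nat.sub_sub_self (by omega : q.lo ≤ N)] using hbot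

theorem exists_intervals [Finite α] (S : NestedSCD α ρ N) (hρ : Monotone ρ)
    {j k : ℕ} (hjk : j ≤ k) (hk : k ≤ N) :
    ∃ F : Finset (α × α), F.card ≤ max {x | ρ x = j}.ncard {x | ρ x = k}.ncard ∧
      (∀ p ∈ F, ρ p.1 = j ∧ ρ p.2 = k) ∧
      ⋃ p ∈ F, Set.Icc p.1 p.2 = {x | j ≤ ρ x ∧ ρ x ≤ k} := by
  classical
  rcases le_total (j + k) N with hjkN | hNjk
  · obtain ⟨F, hcard, hrank, hcover⟩ := S.exists_intervals_of_add_le hρ hjkN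
    exact ⟨F, hcard.trans (le_max_right _ _), hrank, hcover⟩
  have hρ' : Monotone fun x : αᵒᵈ => N - ρ (ofDual x) := fun _ _ h =>
    Nat.sub_le_sub_left (hρ h) N
  obtain ⟨F, hcard, hrank, hcover⟩ :=
    S.dual.exists_intervals_of_add_le hρ' (j := N - k) (k := N - j) (by omega)
  refine ⟨F.image fun p => (ofDual p.2, ofDual p.1), ?_, ?_, ?_⟩
  · refine card_image_le.trans (hcard.trans (le_of_eq ?_) |>.trans (le_max_left _ _))
    congr 1
    ext x
    change N - ρ (ofDual x) = N - j ↔ ρ (ofDual x) = j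
    have := S.rank_le (ofDual x)
    omega
  · simp only [mem_image]
    rintro _ ⟨p, hp, rfl⟩
    have := hrank p hp
    have := S.rank_le (ofDual p.1)
    have := S.rank_le (ofDual p.2)
    dsimp only
    constructor <;> omega
  · ext x
    have hx := Set.ext_iff.1 hcover (toDual x)
    simp only [Set.mem_iUnion, Set.mem_Icc, exists_prop, Set.mem_ofPred_eq, ofDual_toDual,
      le_toDual, toDual_le] at hx
    simp only [Set.mem_iUnion, Set.mem_Icc, exists_prop, Set.mem_ofPred_eq, exists_mem_image]
    refine (exists_congr fun p => and_congr_right fun _ => and_comm).trans (hx.trans ?_)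
    have := S.rank_le x
    constructor <;> rintro ⟨h₁, h₂⟩ <;> constructor <;> omega

variable {β : Type*} [Preorder β]

open scoped Classical in
noncomputable def map (S : NestedSCD α ρ N) (e : α ≃o β) {ρ' : β → ℕ}
    (hρ : ∀ x, ρ' (e x) = ρ x) : NestedSCD β ρ' N where
  chains := S.chains.image fun p => ⟨p.lo, e ∘ p.elt⟩
  two_mul_lo_le := by
    simp only [forall_mem_image]
    exact S.two_mul_lo_le
  rank_elt := by
    simp only [forall_mem_image, Function.comp_apply, hρ]
    exact S.rank_elt
  monotoneOn_elt := by
    simp only [forall_mem_image]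
    exact fun p hp => e.monotone.comp_monotoneOn (S.monotoneOn_elt p hp)
  exists_mem := by
    intro y
    obtain ⟨p, hp, hy, hpy⟩ := S.exists_mem (e.symm y)
    rw [← hρ, e.apply_symm_apply] at hy hpy
    exact ⟨_, mem_image_of_mem _ hp, hy, by simp [hpy]⟩
  eq_of_elt_eq := by
    simp only [forall_mem_image]
    intro p hp q hq m hmp hmq hpq
    rw [S.eq_of_elt_eq p hp q hq m hmp hmq (e.injective hpq)]
  exists_parent := by
    simp only [forall_mem_image, exists_mem_image, Function.comp_apply, e.le_iff_le]
    exact S.exists_parent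

def ofUnique [Unique α] (hρ : ∀ x, ρ x = 0) : NestedSCD α ρ 0 where
  chains := {⟨0, fun _ => default⟩}
  two_mul_lo_le := by simp
  rank_elt := by simp [hρ]
  monotoneOn_elt := by simp [MonotoneOn]
  exists_mem x := ⟨_, mem_singleton_self _, by simp [hρ], Subsingleton.elim _ _⟩
  eq_of_elt_eq := by simp
  exists_parent := by simp

open scoped Classical in
noncomputable def hooks (S : NestedSCD α ρ N) (m : ℕ) :
    Finset (SymmChain (Fin (m + 1) × α)) :=
  S.chains.biUnion fun p => (range (min m (N - 2 * p.lo) + 1)).image (p.hook N m)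

theorem mem_hooks {S : NestedSCD α ρ N} {m : ℕ} {q : SymmChain (Fin (m + 1) × α)} :
    q ∈ S.hooks m ↔ ∃ p ∈ S.chains, ∃ t ≤ m, 2 * p.lo + t ≤ N ∧ p.hook N m t = q := by
  simp only [hooks, mem_biUnion, mem_image, mem_range]
  refine exists_congr fun p => and_congr_right fun hp => ?_
  have := S.two_mul_lo_le p hp
  exact ⟨fun ⟨t, ht, hq⟩ => ⟨t, by omega, by omega, hq⟩,
    fun ⟨t, htm, htN, hq⟩ => ⟨t, by omega, hq⟩⟩

theorem exists_hook_elt_eq (S : NestedSCD α ρ N) (m : ℕ) (x : Fin (m + 1) × α) :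
    ∃ q ∈ S.hooks m, (x.1 : ℕ) + ρ x.2 ∈ Set.Icc q.lo (m + N - q.lo) ∧
      q.elt (x.1 + ρ x.2) = x := by
  obtain ⟨a, y⟩ := x
  dsimp only
  obtain ⟨p, hp, ⟨hy₁, hy₂⟩, hpy⟩ := S.exists_mem y
  have ha := Nat.lt_succ_iff.1 a.isLt
  have hlo := S.two_mul_lo_le p hp
  refine ⟨p.hook N m (min a (N - p.lo - ρ y)),
    mem_hooks.2 ⟨p, hp, _, by omega, by omega, rfl⟩,
    ⟨by simp only [hook_lo]; omega, by simp only [hook_lo]; omega⟩, ?_⟩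
  rw [hook_elt_eq (s := a) (by omega), Nat.add_sub_cancel_left, hpy]
  exact Prod.ext (Fin.ext (by simp only [Fin.coe_clamp]; omega)) rfl

theorem eq_of_hook_elt_eq (S : NestedSCD α ρ N) {m M : ℕ} {q q' : SymmChain (Fin (m + 1) × α)}
    (hq : q ∈ S.hooks m) (hq' : q' ∈ S.hooks m) (hM : M ∈ Set.Icc q.lo (m + N - q.lo))
    (hM' : M ∈ Set.Icc q'.lo (m + N - q'.lo)) (h : q.elt M = q'.elt M) : q = q' := by
  obtain ⟨p, hp, t, htm, htN, rfl⟩ := mem_hooks.1 hq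
  obtain ⟨p', hp', t', htm', htN', rfl⟩ := mem_hooks.1 hq'
  obtain ⟨hM₁, hM₂⟩ := hM
  obtain ⟨hM₁', hM₂'⟩ := hM'
  simp only [hook_lo] at hM₁ hM₂ hM₁' hM₂'
  rw [hook_elt_eq rfl, hook_elt_eq rfl, Prod.mk.injEq, Fin.ext_iff, Fin.coe_clamp,
    Fin.coe_clamp] at h
  obtain ⟨hcol, hrow⟩ := h
  rw [show max t' (M + t' + p'.lo - N) = max t (M + t + p.lo - N) by omega] at hrow
  obtain rfl := S.eq_of_elt_eq p hp p' hp' _ ⟨by omega, by omega⟩ ⟨by omega, by omega⟩ hrow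
  obtain rfl : t = t' := by omega
  rfl

theorem exists_hook_parent (S : NestedSCD α ρ N) {m : ℕ} {q : SymmChain (Fin (m + 1) × α)}
    (hq : q ∈ S.hooks m) (hlo : 0 < q.lo) : ∃ q' ∈ S.hooks m, q'.lo + 1 = q.lo ∧
      q'.elt q'.lo ≤ q.elt q.lo ∧ q.elt (m + N - q.lo) ≤ q'.elt (m + N - q'.lo) := by
  obtain ⟨p, hp, t, htm, htN, rfl⟩ := mem_hooks.1 hq
  simp only [hook_lo] at hlo ⊢
  rcases Nat.eq_zero_or_pos t with rfl | ht
  · obtain ⟨p', hp', hp'p, hbot, htop⟩ := S.exists_parent p hp (by omega)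
    refine ⟨p'.hook N m 0, mem_hooks.2 ⟨p', hp', 0, by omega, by omega, rfl⟩, by simp [hp'p],
      ?_, ?_⟩ <;> simp only [hook_lo]
    · rw [hook_elt_eq (s := 0) (by omega), hook_elt_eq (s := 0) (by omega)]
      simpa using hbot
    · rw [hook_elt_eq (s := m) (by omega), hook_elt_eq (s := m) (by omega),
        show m + N - (p.lo + 0) - m = N - p.lo by omega,
        show m + N - (p'.lo + 0) - m = N - p'.lo by omega]
      exact Prod.mk_le_mk.2 ⟨le_rfl, htop⟩
  · have hlo := S.two_mul_lo_le p hp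
    refine ⟨p.hook N m (t - 1), mem_hooks.2 ⟨p, hp, t - 1, by omega, by omega, rfl⟩,
      by simp only [hook_lo]; omega, ?_, ?_⟩ <;> simp only [hook_lo]
    · rw [hook_elt_eq (s := t - 1) (by omega), hook_elt_eq (s := t) (by omega),
        show p.lo + (t - 1) - (t - 1) = p.lo by omega, show p.lo + t - t = p.lo by omega]
      exact Prod.mk_le_mk.2 ⟨Fin.clamp_le_clamp (by omega) m, le_rfl⟩
    · rw [hook_elt_eq (s := m) (by omega), hook_elt_eq (s := m) (by omega)]
      exact Prod.mk_le_mk.2 ⟨le_rfl,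
        S.monotoneOn_elt p hp ⟨by omega, by omega⟩ ⟨by omega, by omega⟩ (by omega)⟩

noncomputable def prodFin (S : NestedSCD α ρ N) (m : ℕ) :
    NestedSCD (Fin (m + 1) × α) (fun x => x.1 + ρ x.2) (m + N) where
  chains := S.hooks m
  two_mul_lo_le := by
    intro q hq
    obtain ⟨p, hp, t, htm, htN, rfl⟩ := mem_hooks.1 hq
    simp only [hook_lo]
    omega
  rank_elt := by
    intro q hq M hM
    obtain ⟨p, hp, t, htm, htN, rfl⟩ := mem_hooks.1 hq
    obtain ⟨hM₁, hM₂⟩ := hM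
    simp only [hook_lo] at hM₁ hM₂
    rw [hook_elt_eq rfl, Fin.coe_clamp, S.rank_elt p hp _ ⟨by omega, by omega⟩]
    omega
  monotoneOn_elt := by
    intro q hq M hM M' hM' hMM'
    obtain ⟨p, hp, t, htm, htN, rfl⟩ := mem_hooks.1 hq
    obtain ⟨hM₁, hM₂⟩ := hM
    obtain ⟨hM₁', hM₂'⟩ := hM'
    simp only [hook_lo] at hM₁ hM₂ hM₁' hM₂'
    rw [hook_elt_eq rfl, hook_elt_eq rfl]
    exact Prod.mk_le_mk.2 ⟨Fin.clamp_le_clamp (by omega) m,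
      S.monotoneOn_elt p hp ⟨by omega, by omega⟩ ⟨by omega, by omega⟩ (by omega)⟩
  exists_mem := S.exists_hook_elt_eq m
  eq_of_elt_eq _ hq _ hq' _ hM hM' := S.eq_of_hook_elt_eq hq hq' hM hM'
  exists_parent _ hq := S.exists_hook_parent hq

theorem nonempty_pi_fin : ∀ (n : ℕ) (c : Fin n → ℕ),
    Nonempty (NestedSCD (∀ i, Fin (c i + 1)) (fun x => ∑ i, (x i : ℕ)) (∑ i, c i))
  | 0, c => by
    rw [Fin.sum_univ_zero]
    exact ⟨ofUnique fun x => Fin.sum_univ_zero _⟩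
  | n + 1, c => by
    obtain ⟨S⟩ := nonempty_pi_fin n fun i => c i.succ
    rw [Fin.sum_univ_succ]
    exact ⟨(S.prodFin (c 0)).map (Fin.consOrderIso fun i => Fin (c i + 1)) fun x => by
      simp [Fin.sum_univ_succ]⟩

theorem nonempty_pi {ι : Type*} [Fintype ι] (c : ι → ℕ) :
    Nonempty (NestedSCD (∀ i, Fin (c i + 1)) (fun x => ∑ i, (x i : ℕ)) (∑ i, c i)) := by
  let e := (Fintype.equivFin ι).symm
  obtain ⟨S⟩ := nonempty_pi_fin _ fun i => c (e i)
  rw [← e.sum_comp c]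
  refine ⟨S.map (OrderIso.piCongrLeft (fun i => Fin (c i + 1)) e) fun x => ?_⟩
  rw [← e.sum_comp]
  simp [OrderIso.piCongrLeft]

end NestedSCD

/-- **(Bouchemakh–Engel).** Every finite product of finite chains has the strong
interval covering property: with `P = Π i, {0, …, c i}` ordered componentwise and
rank `r x = Σ i, x i`, for all `j ≤ k ≤ Σ i, c i` the set
`{x | j ≤ r x ≤ k}` is the union of `max(|L_j|, |L_k|)` intervals `[a, b]` with
`a` in level `j` and `b` in level `k`. -/
theorem stmt14 {ι : Type*} [Fintype ι] (c : ι → ℕ)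
    (j k : ℕ) (hjk : j ≤ k) (hk : k ≤ ∑ i, c i) :
    ∃ F : Finset ((∀ i, Fin (c i + 1)) × (∀ i, Fin (c i + 1))),
      F.card ≤ max {x : ∀ i, Fin (c i + 1) | ∑ i, (x i : ℕ) = j}.ncard
                   {x : ∀ i, Fin (c i + 1) | ∑ i, (x i : ℕ) = k}.ncard ∧
      (∀ p ∈ F, (∑ i, (p.1 i : ℕ)) = j ∧ (∑ i, (p.2 i : ℕ)) = k) ∧
      (⋃ p ∈ F, Set.Icc p.1 p.2) =
        {x : ∀ i, Fin (c i + 1) | j ≤ ∑ i, (x i : ℕ) ∧ ∑ i, (x i : ℕ) ≤ k} := by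
  obtain ⟨S⟩ := NestedSCD.nonempty_pi c
  exact S.exists_intervals (fun x y h => Finset.sum_le_sum fun i _ => h i) hjk hk
end
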